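/- arXiv:1905.02740 — 12 statements merged into one kernel-verified Lean document; each statement's English description precedes it below -/
import Mathlib

section
/- Let G be an amenable group, let A be a finite set, and let X ⊂ A^G be a strongly irreducible subshift. Equip X with the shift action of G and with the topology (and uniform structure) induced by the prodiscrete topology on A^G. Then every pre-injective continuous G-equivariant map f : X → X is surjective; in particular, every injective continuous G-equivariant self-map of X is surjective. -/
open scoped Pointwise Uniformity
open Filter

/-- A left Følner net for a group `G`. -/
structure FolnerNet (G : Type*) [Group G] where
  J : Type*
  pre : Preorder J
  dir : IsDirected J fun a b => pre.le a b
  nonempty : Nonempty J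
  F : J → Finset G
  F_nonempty : ∀ j, (F j).Nonempty
  folner : ∀ g : G,
    Filter.Tendsto (fun j => (((g • (F j : Set G)) \ (F j : Set G)).ncard : ℝ) / ((F j).card : ℝ))
      (@Filter.atTop J pre) (nhds 0)

/-- The shift action of `G` on `A^G`, namely `(g • x)(h) = x (g⁻¹ h)`. -/
def shift {G A : Type*} [Group G] (g : G) (x : G → A) : G → A := fun h => x (g⁻¹ * h)

/-- A subset `X ⊆ A^G` is strongly irreducible if there is a finite `Δ ⊆ G` such that
configurations of `X` prescribed on finite sets `Ω₁, Ω₂` with `Ω₁ ∩ Ω₂Δ = ∅` can be glued. -/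
def StronglyIrreducible {G A : Type*} [Group G] (X : Set (G → A)) : Prop :=
  ∃ Δ : Finset G, ∀ Ω₁ Ω₂ : Finset G,
    Disjoint (Ω₁ : Set G) ((Ω₂ : Set G) * (Δ : Set G)) →
    ∀ x₁ ∈ X, ∀ x₂ ∈ X, ∃ x ∈ X, (∀ g ∈ Ω₁, x g = x₁ g) ∧ (∀ g ∈ Ω₂, x g = x₂ g)

/-!
If `f` is not surjective, its image `Y` is a proper subshift of `X`, so the restriction `z|Ω` of
some `z ∈ X` to a finite set occurs nowhere in `Y`. Count patterns on a right Følner set `F`.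
Strong irreducibility lets one overwrite a pattern of `Y` by translates of `z|Ω` on any family of
well-separated tiles `gΩΔ ⊆ F`. Choosing one tile out of `m = 2|A|^|ΩΔ|` in each of `t` groups,
the choice can be read off the result (as `Y` omits `z|Ω`) and each group costs at most
`|A|^|ΩΔ|` patterns, so `X` has at least `2^t` times as many patterns on `F` as `Y`. Conversely,
completing each pattern of `X` on `F` by `z` outside `FΔ` and applying `f` is injective by
pre-injectivity, and by the finite memory `S` of `f` the images all agree outside `FΔS⁻¹`; so `X`
has at most `|A|^b` times as many patterns on `F` as `Y`, where `b` is the size of the boundary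
`FΔS⁻¹ \ F`. A Følner set holds many separated tiles compared to its boundary, so `2^t > |A|^b`.
-/

theorem pow_lt_two_pow_mul_add_one (a b : ℕ) : a ^ b < 2 ^ (a * b + 1) :=
  calc a ^ b ≤ (2 ^ a) ^ b := Nat.pow_le_pow_left Nat.lt_two_pow_self.le _
    _ < 2 ^ (a * b + 1) := by
      rw [← pow_mul]
      exact Nat.pow_lt_pow_succ one_lt_two

section Uniformity

variable {G A : Type*} [uA : UniformSpace A]

theorem discreteTopology_of_eq_bot (hdisc : uA = ⊥) : DiscreteTopology A :=
  ⟨by rw [hdisc]; rfl⟩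

theorem hasBasis_uniformity_pi_of_eq_bot (hdisc : uA = ⊥) :
    (𝓤 (G → A)).HasBasis (fun _ : Finset G => True)
      fun T => {p | ∀ g ∈ T, p.1 g = p.2 g} := by
  have hA : 𝓤 A = 𝓟 SetRel.id := by
    subst hdisc
    rfl
  have h : 𝓤 (G → A) = ⨅ g : G, 𝓟 {p : (G → A) × (G → A) | p.1 g = p.2 g} := by
    simp only [Pi.uniformity, hA, comap_principal]
    rfl
  rw [h]
  refine ⟨fun U => (mem_iInf_finite _).trans ?_⟩
  simp [iInf_principal_finset, Set.subset_def]

theorem hasBasis_uniformity_subtype_pi_of_eq_bot (hdisc : uA = ⊥) (X : Set (G → A)) :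
    (𝓤 X).HasBasis (fun _ : Finset G => True)
      fun T => {p | ∀ g ∈ T, (p.1 : G → A) g = (p.2 : G → A) g} := by
  rw [uniformity_subtype]
  exact (hasBasis_uniformity_pi_of_eq_bot hdisc).comap _

theorem compactSpace_of_isClosed [Finite A] (hdisc : uA = ⊥) {X : Set (G → A)}
    (hX : IsClosed X) : CompactSpace X :=
  have := discreteTopology_of_eq_bot hdisc
  isCompact_iff_compactSpace.1 hX.isCompact

end Uniformity

section Finset

variable {G : Type*} [Group G] [DecidableEq G]

theorem Finset.exists_pairwise_subset_subset_mul (K I : Finset G) :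
    ∃ J ⊆ I, (J : Set G).Pairwise (fun g g' => g⁻¹ * g' ∉ K) ∧ I ⊆ J * insert 1 (K ∪ K⁻¹) := by
  induction I using Finset.induction_on with
  | empty => exact ⟨∅, subset_rfl, by simp, by simp⟩
  | insert a I _ ih =>
    obtain ⟨J, hJI, hJ, hIJ⟩ := ih
    by_cases ha : a ∈ J * insert 1 (K ∪ K⁻¹)
    · exact ⟨J, hJI.trans (subset_insert a I), hJ, insert_subset ha hIJ⟩
    refine ⟨insert a J, insert_subset_insert a hJI, ?_, ?_⟩
    · rw [coe_insert, Set.pairwise_insert]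
      refine ⟨hJ, fun g hg _ => ⟨fun h => ha ?_, fun h => ha ?_⟩⟩
      · simpa using mul_mem_mul hg (mem_insert_of_mem (mem_union_right _ (inv_mem_inv h)))
      · simpa using mul_mem_mul hg (mem_insert_of_mem (mem_union_left _ h))
    · exact insert_subset (mem_mul.2 ⟨a, mem_insert_self a J, 1, mem_insert_self _ _, mul_one a⟩)
        (hIJ.trans (mul_subset_mul_right (subset_insert a J)))

theorem Finset.card_sdiff_filter_smul_subset_le (F D : Finset G) :
    (F \ F.filter fun g => g • D ⊆ F).card ≤ ∑ d ∈ D, ((F * {d}) \ F).card := by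
  refine (card_le_card fun g hg => ?_).trans
    ((card_biUnion_le (s := D) (t := fun d => ((F * {d}) \ F) * {d⁻¹})).trans_eq
      (sum_congr rfl fun d _ => card_mul_singleton _ _))
  obtain ⟨hgF, hgD⟩ := mem_sdiff.1 hg
  obtain ⟨_, hgd', hgd⟩ := not_subset.1 fun h => hgD (mem_filter.2 ⟨hgF, h⟩)
  obtain ⟨d, hd, rfl⟩ := mem_smul_finset.1 hgd'
  have := mul_mem_mul (mem_sdiff.2 ⟨mul_mem_mul hgF (mem_singleton_self d), hgd⟩)
    (mem_singleton_self d⁻¹)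
  exact mem_biUnion.2 ⟨d, hd, by simpa using this⟩

theorem Finset.card_mul_sdiff_le (F E : Finset G) :
    ((F * E) \ F).card ≤ ∑ e ∈ E, ((F * {e}) \ F).card := by
  refine (card_le_card fun g hg => ?_).trans (card_biUnion_le (s := E))
  obtain ⟨hgFE, hgF⟩ := mem_sdiff.1 hg
  obtain ⟨a, ha, e, he, rfl⟩ := mem_mul.1 hgFE
  exact mem_biUnion.2 ⟨e, he, mem_sdiff.2 ⟨mul_mem_mul ha (mem_singleton_self e), hgF⟩⟩

theorem Finset.card_le_card_of_forall_mul_card_smul_sdiff_lt {U B : Finset G} (hB : B.Nonempty)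
    (h : ∀ u ∈ U, U.card * ((u • B) \ B).card < B.card) : U.card ≤ B.card := by
  by_contra! hlt
  have hinv : ∀ u ∈ U, u • B ⊆ B := fun u hu => sdiff_eq_empty_iff_subset.1 <| card_eq_zero.1 <|
    by_contra fun h0 => (Nat.le_mul_of_pos_right _ (Nat.pos_of_ne_zero h0)).not_gt
      ((h u hu).trans hlt)
  obtain ⟨x, hx⟩ := hB
  refine hlt.not_ge ((card_mul_singleton U x).symm.trans_le (card_le_card fun g hg => ?_))
  obtain ⟨u, hu, _, hx', rfl⟩ := mem_mul.1 hg
  obtain rfl := mem_singleton.1 hx'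
  exact hinv u hu (smul_mem_smul_finset hx)

theorem Finset.card_mul_singleton_sdiff_inv (B : Finset G) (v : G) :
    ((B⁻¹ * {v}) \ B⁻¹).card = ((v⁻¹ • B) \ B).card := by
  rw [← card_inv]
  congr 1
  ext g
  simp only [mem_inv', mem_sdiff, mem_mul, mem_singleton, exists_eq_left, inv_inv,
    mem_smul_finset, smul_eq_mul, and_congr_left_iff]
  refine fun _ => ⟨fun ⟨y, hy, h⟩ => ⟨y⁻¹, hy, ?_⟩, fun ⟨y, hy, h⟩ => ⟨y⁻¹, ?_, ?_⟩⟩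
  · rw [← inv_inv g, ← h, mul_inv_rev]
  · simpa using hy
  · rw [← h, mul_inv_rev, inv_inv]

theorem Finset.disjoint_smul_finset_of_inv_mul_notMem {Ω D : Finset G} {g g' : G}
    (h : g'⁻¹ * g ∉ D * Ω⁻¹) : Disjoint (g • Ω) (g' • D) := by
  refine disjoint_left.2 fun x hx hx' => h ?_
  obtain ⟨ω, hω, rfl⟩ := mem_smul_finset.1 hx
  obtain ⟨d, hd, hdx⟩ := mem_smul_finset.1 hx'
  rw [show g'⁻¹ * g = d * ω⁻¹ by rw [eq_mul_inv_iff_mul_eq, mul_assoc, ← smul_eq_mul g, ← hdx,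
    smul_eq_mul, inv_mul_cancel_left]]
  exact mul_mem_mul hd (inv_mem_inv hω)

theorem mul_mem_smul_mul {Ω Δ : Finset G} (h1Δ : (1 : G) ∈ Δ) (g : G) {h : G} (hh : h ∈ Ω) :
    g * h ∈ g • (Ω * Δ) := by
  simpa using Finset.smul_mem_smul_finset (a := g) (Finset.mul_mem_mul hh h1Δ)

theorem FolnerNet.exists_mul_card_smul_sdiff_lt (net : FolnerNet G) (V : Finset G) (Z : ℕ) :
    ∃ j, ∀ v ∈ V, Z * ((v • net.F j) \ net.F j).card < (net.F j).card := by
  let := net.pre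
  have : (atTop : Filter net.J).NeBot := atTop_neBot_iff.2 ⟨net.nonempty, net.dir⟩
  suffices h : ∀ᶠ j in atTop, ∀ v ∈ V, Z * ((v • net.F j) \ net.F j).card < (net.F j).card from
    h.exists
  refine (eventually_all_finset V).2 fun v _ => ?_
  filter_upwards [(net.folner v).eventually_lt_const (inv_pos.2 (Nat.cast_add_one_pos Z))]
    with j hj
  have hF : (0 : ℝ) < (net.F j).card := by exact_mod_cast (net.F_nonempty j).card_pos
  rw [← Finset.coe_smul_finset, ← Finset.coe_sdiff, Set.ncard_coe_finset,
    div_lt_iff₀ hF, inv_mul_eq_div, lt_div_iff₀ (Nat.cast_add_one_pos Z)] at hj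
  have hd : (0 : ℝ) ≤ ((v • net.F j) \ net.F j).card := Nat.cast_nonneg _
  exact_mod_cast (show (Z : ℝ) * ((v • net.F j) \ net.F j).card < (net.F j).card by nlinarith)

theorem FolnerNet.exists_right_folner [Infinite G] (net : FolnerNet G) (V : Finset G) (Z R : ℕ) :
    ∃ F : Finset G, (∀ v ∈ V, Z * ((F * {v}) \ F).card < F.card) ∧ R ≤ F.card := by
  obtain ⟨U, hU⟩ := Infinite.exists_subset_card_eq G R
  obtain ⟨j, hj⟩ := net.exists_mul_card_smul_sdiff_lt (V⁻¹ ∪ U) (max Z R)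
  refine ⟨(net.F j)⁻¹, fun v hv => ?_, ?_⟩
  · rw [Finset.card_mul_singleton_sdiff_inv, Finset.card_inv]
    exact (Nat.mul_le_mul_right _ (le_max_left Z R)).trans_lt
      (hj v⁻¹ (Finset.mem_union_left _ (Finset.inv_mem_inv hv)))
  · rw [Finset.card_inv, ← hU]
    exact Finset.card_le_card_of_forall_mul_card_smul_sdiff_lt (net.F_nonempty j) fun u hu =>
      (Nat.mul_le_mul_right _ (hU ▸ le_max_right Z R)).trans_lt (hj u (Finset.mem_union_right _ hu))

theorem FolnerNet.exists_separated_tiles [Infinite G] (net : FolnerNet G) (Ω D E : Finset G)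
    (α n : ℕ) : ∃ F J : Finset G, (∀ g ∈ J, g • D ⊆ F) ∧
      (J : Set G).Pairwise (fun g g' => Disjoint (g • Ω) (g' • D)) ∧
      α * ((F * E) \ F).card + n ≤ J.card := by
  -- `κ` bounds the loss in the greedy choice of `J`. With the Følner threshold `2 * W`, the cells
  -- of `F` near its boundary and `κ α` times the boundary fill at most half of `F`, `κ n` the rest.
  set κ := (insert 1 (D * Ω⁻¹ ∪ (D * Ω⁻¹)⁻¹)).card
  set W := κ * α * E.card + D.card + 1
  obtain ⟨F, hF, hFn⟩ := net.exists_right_folner (D ∪ E) (2 * W) (2 * κ * n)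
  set I := F.filter fun g => g • D ⊆ F
  obtain ⟨J, hJI, hJ, hIJ⟩ := Finset.exists_pairwise_subset_subset_mul (D * Ω⁻¹) I
  refine ⟨F, J, fun g hg => (Finset.mem_filter.1 (hJI hg)).2, fun g hg g' hg' hne =>
    Finset.disjoint_smul_finset_of_inv_mul_notMem (hJ hg' hg hne.symm), ?_⟩
  have hsum {V : Finset G} (hV : V ⊆ D ∪ E) :
      2 * W * ∑ v ∈ V, ((F * {v}) \ F).card ≤ V.card * F.card := by
    rw [Finset.mul_sum]
    exact Finset.sum_le_card_nsmul _ _ _ fun v hv => (hF v (hV hv)).le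
  have he : 2 * W * (F \ I).card ≤ D.card * F.card :=
    (Nat.mul_le_mul_left _ (Finset.card_sdiff_filter_smul_subset_le F D)).trans
      (hsum Finset.subset_union_left)
  have hb : 2 * W * ((F * E) \ F).card ≤ E.card * F.card :=
    (Nat.mul_le_mul_left _ (Finset.card_mul_sdiff_le F E)).trans (hsum Finset.subset_union_right)
  have hFI : (F \ I).card + I.card = F.card :=
    Finset.card_sdiff_add_card_eq_card (Finset.filter_subset _ _)
  have hIJ : I.card ≤ J.card * κ := (Finset.card_le_card hIJ).trans Finset.card_mul_le
  have hκ : 0 < κ := Finset.card_pos.2 ⟨1, Finset.mem_insert_self _ _⟩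
  have key : 2 * W * (κ * (α * ((F * E) \ F).card + n) + (F \ I).card) ≤ 2 * W * F.card := by
    calc _ = κ * α * (2 * W * ((F * E) \ F).card) + W * (2 * κ * n) + 2 * W * (F \ I).card := by
          ring
      _ ≤ κ * α * (E.card * F.card) + W * F.card + D.card * F.card := by gcongr
      _ = (κ * α * E.card + D.card) * F.card + W * F.card := by ring
      _ ≤ W * F.card + W * F.card := by gcongr; exact Nat.le_succ _
      _ = 2 * W * F.card := by ring
  have := Nat.le_of_mul_le_mul_left key (by positivity)
  exact Nat.le_of_mul_le_mul_left
    (show κ * (α * ((F * E) \ F).card + n) ≤ κ * J.card by linarith) hκ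

end Finset

section Subshift

variable {G A : Type*} [Group G]

@[simp]
theorem shift_apply (g : G) (x : G → A) (h : G) : shift g x h = x (g⁻¹ * h) := rfl

/-- Stated with the same disjointness condition as `StronglyIrreducible`, so that
`StronglyIrreducible X` unfolds to `∃ Δ, DeltaIrreducible X Δ`. -/
def DeltaIrreducible (X : Set (G → A)) (Δ : Finset G) : Prop :=
  ∀ Ω₁ Ω₂ : Finset G, Disjoint (Ω₁ : Set G) ((Ω₂ : Set G) * (Δ : Set G)) →
    ∀ x₁ ∈ X, ∀ x₂ ∈ X, ∃ x ∈ X, (∀ g ∈ Ω₁, x g = x₁ g) ∧ (∀ g ∈ Ω₂, x g = x₂ g)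

def OmitsPattern (Y : Set (G → A)) (Ω : Finset G) (z : G → A) : Prop :=
  ∀ y ∈ Y, ∀ g : G, ∃ h ∈ Ω, y (g * h) ≠ z h

omit [Group G] in
def AlmostEqual (x y : G → A) : Prop :=
  ∃ D : Finset G, ∀ g ∉ D, x g = y g

def IsMemorySet {X : Set (G → A)} (f : X → X) (S : Finset G) : Prop :=
  ∀ (x y : X) (g : G), (∀ s ∈ S, (x : G → A) (g * s) = (y : G → A) (g * s)) →
    (f x : G → A) g = (f y : G → A) g

variable {X : Set (G → A)} {Δ : Finset G}

theorem DeltaIrreducible.mono {Δ' : Finset G} (hX : DeltaIrreducible X Δ) (h : Δ ⊆ Δ') :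
    DeltaIrreducible X Δ' := fun Ω₁ Ω₂ hΩ =>
  hX Ω₁ Ω₂ (hΩ.mono_right (Set.mul_subset_mul_left (Finset.coe_subset.2 h)))

section Topology

variable [uA : UniformSpace A]

theorem exists_memory_set [Finite A] (hdisc : uA = ⊥) (hX : IsClosed X)
    (hinv : ∀ g, ∀ x ∈ X, shift g x ∈ X) {f : X → X} (hf : Continuous f)
    (hequi : ∀ (g : G) (x : X),
      f ⟨shift g x, hinv g x x.2⟩ = ⟨shift g (f x), hinv g (f x) (f x).2⟩) :
    ∃ S : Finset G, IsMemorySet f S := by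
  have := compactSpace_of_isClosed hdisc hX
  have hb := hasBasis_uniformity_subtype_pi_of_eq_bot (G := G) hdisc X
  obtain ⟨S, -, hS⟩ := (hb.uniformContinuous_iff hb).1
    (CompactSpace.uniformContinuous_of_continuous hf) {1} trivial
  refine ⟨S, fun x y g hxy => ?_⟩
  have := hS ⟨shift g⁻¹ x, hinv _ _ x.2⟩ ⟨shift g⁻¹ y, hinv _ _ y.2⟩ (by simpa using hxy) 1
    (Finset.mem_singleton_self 1)
  simpa [hequi] using this

theorem homoclinic_of_almostEqual (hdisc : uA = ⊥) (hinv : ∀ g, ∀ x ∈ X, shift g x ∈ X)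
    {x y : X} (hxy : AlmostEqual (x : G → A) y) :
    ∀ U ∈ 𝓤 X, ∃ Ω : Finset G, ∀ g : G, g ∉ Ω →
      ((⟨shift g x, hinv g x x.2⟩ : X), (⟨shift g y, hinv g y y.2⟩ : X)) ∈ U := by
  classical
  intro U hU
  obtain ⟨D, hD⟩ := hxy
  obtain ⟨T, -, hT⟩ := (hasBasis_uniformity_subtype_pi_of_eq_bot hdisc X).mem_iff.1 hU
  refine ⟨T * D⁻¹, fun g hg => hT fun h hh => hD _ fun hgh => hg ?_⟩
  simpa using Finset.mul_mem_mul hh (Finset.inv_mem_inv hgh)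

theorem exists_omitsPattern_of_notMem (hdisc : uA = ⊥) {Y : Set (G → A)} (hY : IsClosed Y)
    (hinv : ∀ g, ∀ y ∈ Y, shift g y ∈ Y) {z : G → A} (hz : z ∉ Y) :
    ∃ Ω : Finset G, OmitsPattern Y Ω z := by
  obtain ⟨T, -, hT⟩ := (nhds_basis_uniformity' (hasBasis_uniformity_pi_of_eq_bot hdisc)).mem_iff.1
    (hY.isOpen_compl.mem_nhds hz)
  refine ⟨T, fun y hy g => ?_⟩
  by_contra! h
  exact hT (fun k hk => by simp [h k hk]) (hinv g⁻¹ y hy)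

theorem DeltaIrreducible.exists_eqOn_of_isClosed [Finite A] (hdisc : uA = ⊥)
    (hX : DeltaIrreducible X Δ) (hXc : IsClosed X) {C : Set G} {Ω : Finset G}
    (hC : Disjoint C ((Ω : Set G) * (Δ : Set G))) {x₁ x₂ : G → A} (hx₁ : x₁ ∈ X)
    (hx₂ : x₂ ∈ X) : ∃ x ∈ X, (∀ g ∈ C, x g = x₁ g) ∧ (∀ g ∈ Ω, x g = x₂ g) := by
  have := discreteTopology_of_eq_bot hdisc
  have hclosed : IsClosed (X ∩ {x | ∀ g ∈ Ω, x g = x₂ g}) := by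
    simp only [Set.ofPred_forall]
    exact hXc.inter (isClosed_biInter fun g _ => isClosed_eq (continuous_apply g) continuous_const)
  obtain ⟨x, ⟨hxX, hxΩ⟩, hxC⟩ := hclosed.isCompact.inter_iInter_nonempty
    (fun g : C => {x : G → A | x g = x₁ g})
    (fun g => isClosed_eq (continuous_apply _) continuous_const) fun u => by
      obtain ⟨x, hx, h1, h2⟩ := hX (u.map (Function.Embedding.subtype _)) Ω
        (hC.mono_left (by simp)) x₁ hx₁ x₂ hx₂
      exact ⟨x, ⟨hx, h2⟩, Set.mem_iInter₂.2 fun g hg => h1 g (Finset.mem_map_of_mem _ hg)⟩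
  exact ⟨x, hxX, fun g hg => Set.mem_iInter.1 hxC ⟨g, hg⟩, hxΩ⟩

end Topology

variable [DecidableEq G]

theorem DeltaIrreducible.exists_eqOn_translates (hX : DeltaIrreducible X Δ) {ι : Type*}
    [DecidableEq ι] {Ω : Finset G} {τ : ι → G} (s : Finset ι)
    (hsep : ∀ i ∈ s, ∀ j ∈ s, i ≠ j → Disjoint (τ i • Ω) (τ j • (Ω * Δ))) {C : Finset G}
    (hC : ∀ i ∈ s, Disjoint C (τ i • (Ω * Δ))) {y z : G → A} (hy : y ∈ X)
    (hz : ∀ g, shift g z ∈ X) :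
    ∃ x ∈ X, (∀ g ∈ C, x g = y g) ∧ ∀ i ∈ s, ∀ h ∈ Ω, x (τ i * h) = z h := by
  induction s using Finset.induction_on with
  | empty => exact ⟨y, hy, fun _ _ => rfl, by simp⟩
  | insert a s ha ih =>
    obtain ⟨x', hx', hx'C, hx's⟩ := ih
      (fun i hi j hj => hsep i (Finset.mem_insert_of_mem hi) j (Finset.mem_insert_of_mem hj))
      (fun i hi => hC i (Finset.mem_insert_of_mem hi))
    have hdisj : Disjoint (C ∪ s.biUnion fun i => τ i • Ω) (τ a • Ω * Δ) := by
      rw [smul_mul_assoc, Finset.disjoint_union_left, Finset.disjoint_biUnion_left]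
      exact ⟨hC a (Finset.mem_insert_self a s), fun i hi => hsep i (Finset.mem_insert_of_mem hi)
        a (Finset.mem_insert_self a s) (ne_of_mem_of_not_mem hi ha)⟩
    obtain ⟨x, hx, hxC, hxa⟩ := hX _ _ (by rwa [← Finset.coe_mul, Finset.disjoint_coe]) x' hx'
      _ (hz (τ a))
    refine ⟨x, hx, fun g hg => (hxC g (Finset.mem_union_left _ hg)).trans (hx'C g hg), ?_⟩
    rintro i hi h hh
    have hmem : τ i * h ∈ τ i • Ω := Finset.smul_mem_smul_finset hh
    rcases Finset.mem_insert.1 hi with rfl | hi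
    · simpa using hxa _ hmem
    · rw [hxC _ (Finset.mem_union_right _ (Finset.mem_biUnion.2 ⟨i, hi, hmem⟩)), hx's i hi h hh]

theorem DeltaIrreducible.exists_eqOn_selected_tiles (hX : DeltaIrreducible X Δ) {Ω : Finset G}
    {y z : G → A} (hy : y ∈ X) (hz : ∀ g, shift g z ∈ X) (F : Finset G) {t m : ℕ}
    {τ : Fin t × Fin m → G} (hτ : Pairwise fun i j => Disjoint (τ i • Ω) (τ j • (Ω * Δ)))
    (σ : Fin t → Fin m) : ∃ x ∈ X, (∀ g ∈ F, (∀ j, g ∉ τ (j, σ j) • (Ω * Δ)) → x g = y g) ∧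
      ∀ j, ∀ h ∈ Ω, x (τ (j, σ j) * h) = z h := by
  obtain ⟨x, hx, hxC, hxz⟩ := hX.exists_eqOn_translates (τ := fun j => τ (j, σ j)) Finset.univ
    (fun i _ j _ hij => hτ fun h => hij (congrArg Prod.fst h))
    (C := F.filter fun g => ∀ j, g ∉ τ (j, σ j) • (Ω * Δ))
    (fun j _ => Finset.disjoint_left.2 fun g hg => (Finset.mem_filter.1 hg).2 j) hy hz
  exact ⟨x, hx, fun g hg hgσ => hxC g (Finset.mem_filter.2 ⟨hg, hgσ⟩),
    fun j => hxz j (Finset.mem_univ j)⟩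

omit [Group G] in
theorem ncard_restrict_image_le_mul [Finite A] (W : Set (G → A)) {E E' : Finset G} (h : E ⊆ E') :
    (E'.restrict '' W).ncard ≤ (E.restrict '' W).ncard * Nat.card A ^ (E' \ E).card := by
  let φ : (E' → A) → (E → A) × ((E' \ E : Finset G) → A) :=
    fun p => (Finset.restrict₂ (π := fun _ => A) h p, fun g => p ⟨g, (Finset.mem_sdiff.1 g.2).1⟩)
  calc (E'.restrict '' W).ncard
      ≤ ((E.restrict '' W) ×ˢ (Set.univ : Set ((E' \ E : Finset G) → A))).ncard := by
        refine Set.ncard_le_ncard_of_injOn φ ?_ (fun p _ q _ hpq => ?_)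
        · rintro _ ⟨x, hx, rfl⟩
          exact ⟨⟨x, hx, rfl⟩, trivial⟩
        · funext ⟨g, hg⟩
          by_cases hgE : g ∈ E
          · exact congrFun (congrArg Prod.fst hpq) ⟨g, hgE⟩
          · exact congrFun (congrArg Prod.snd hpq) ⟨g, Finset.mem_sdiff.2 ⟨hg, hgE⟩⟩
    _ = (E.restrict '' W).ncard * Nat.card A ^ (E' \ E).card := by
        rw [Set.ncard_prod, Set.ncard_univ, Nat.card_fun, Nat.card_eq_finsetCard]

theorem ncard_restrict_le_ncard_restrict_range [Finite A] [uA : UniformSpace A]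
    (hdisc : uA = ⊥) (hX : DeltaIrreducible X Δ) (hXc : IsClosed X) {f : X → X} {S : Finset G}
    (hS : IsMemorySet f S) (hf : ∀ x y : X, AlmostEqual (x : G → A) y → f x = f y → x = y)
    {z : G → A} (hz : z ∈ X) (F : Finset G) {E : Finset G} (hE : Δ * S⁻¹ ⊆ E) :
    (F.restrict '' X).ncard ≤ ((F * E).restrict '' Set.range fun x => (f x : G → A)).ncard := by
  let X' : Set X := {x | ∀ g ∉ F * Δ, (x : G → A) g = z g}
  have hglue : F.restrict '' X ⊆ (fun x : X => F.restrict (x : G → A)) '' X' := by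
    rintro _ ⟨x₂, hx₂, rfl⟩
    obtain ⟨x, hx, hxC, hxF⟩ := hX.exists_eqOn_of_isClosed hdisc hXc
      (C := (↑(F * Δ))ᶜ) (by rw [← Finset.coe_mul]; exact disjoint_compl_left) hz hx₂
    exact ⟨⟨x, hx⟩, hxC, funext fun g => hxF g g.2⟩
  have hX' : X'.Finite := by
    refine Set.Finite.of_finite_image (Set.toFinite ((fun x : X => (F * Δ).restrict x.1) '' X'))
      fun x hx y hy hxy => Subtype.ext (funext fun g => ?_)
    by_cases hg : g ∈ F * Δ
    · exact congrFun hxy ⟨g, hg⟩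
    · rw [hx g hg, hy g hg]
  have hfX' : Set.InjOn f X' := fun x hx y hy =>
    hf x y ⟨F * Δ, fun g hg => (hx g hg).trans (hy g hg).symm⟩
  have hres : Set.InjOn (fun u : X => (F * E).restrict u.1) (f '' X') := by
    rintro _ ⟨x, hx, rfl⟩ _ ⟨y, hy, rfl⟩ hxy
    refine Subtype.ext (funext fun g => ?_)
    by_cases hg : g ∈ F * E
    · exact congrFun hxy ⟨g, hg⟩
    refine hS x y g fun s hs => ?_
    have hgs : g * s ∉ F * Δ := fun hgs => hg (Finset.mul_subset_mul_left hE (by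
      simpa [mul_assoc] using Finset.mul_mem_mul hgs (Finset.inv_mem_inv hs)))
    rw [hx _ hgs, hy _ hgs]
  calc (F.restrict '' X).ncard
      ≤ ((fun x : X => F.restrict (x : G → A)) '' X').ncard :=
        Set.ncard_le_ncard hglue (hX'.image _)
    _ ≤ X'.ncard := Set.ncard_image_le hX'
    _ = ((fun u : X => (F * E).restrict u.1) '' (f '' X')).ncard := by
        rw [hres.ncard_image, hfX'.ncard_image]
    _ ≤ ((F * E).restrict '' Set.range fun x => (f x : G → A)).ncard := by
        refine Set.ncard_le_ncard ?_ (Set.toFinite _)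
        rintro _ ⟨_, ⟨x, -, rfl⟩, rfl⟩
        exact ⟨_, ⟨x, rfl⟩, rfl⟩

theorem ncard_restrict_mul_pow_le [Finite A] (hX : DeltaIrreducible X Δ) (h1Δ : (1 : G) ∈ Δ)
    {Y : Set (G → A)} (hYX : Y ⊆ X) {z : G → A} (hz : ∀ g, shift g z ∈ X) {Ω : Finset G}
    (hYz : OmitsPattern Y Ω z) (F : Finset G) {t m : ℕ} (τ : Fin t × Fin m → G)
    (hτF : ∀ i, τ i • (Ω * Δ) ⊆ F) (hτ : Pairwise fun i j => Disjoint (τ i • Ω) (τ j • (Ω * Δ))) :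
    (F.restrict '' Y).ncard * m ^ t ≤
      (F.restrict '' X).ncard * (Nat.card A ^ (Ω * Δ).card) ^ t := by
  choose y hyY hyq using fun q : F.restrict '' Y => q.2
  choose x hxX hxy hxz using fun q σ => hX.exists_eqOn_selected_tiles (hYX (hyY q)) hz F hτ σ
  let Ψ : (F.restrict '' Y) × (Fin t → Fin m) →
      (F.restrict '' X) × (Fin t → (Ω * Δ : Finset G) → A) := fun p =>
    (⟨F.restrict (x p.1 p.2), x p.1 p.2, hxX _ _, rfl⟩, fun j d => y p.1 (τ (j, p.2 j) * d))
  have hΨ : Function.Injective Ψ := by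
    rintro ⟨q, σ⟩ ⟨q', σ'⟩ hqσ
    simp only [Ψ, Prod.mk.injEq] at hqσ
    obtain ⟨hx, hv⟩ := hqσ
    have hxF (g) (hg : g ∈ F) : x q σ g = x q' σ' g :=
      congrFun (congrArg Subtype.val hx) (⟨g, hg⟩ : F)
    -- where `σ` and `σ'` differ, `x q σ` shows a piece of `y q`, which omits the pattern `z|Ω`
    obtain rfl : σ = σ' := by
      funext j
      by_contra hne
      obtain ⟨h, hh, hyz⟩ := hYz (y q) (hyY q) (τ (j, σ' j))
      refine hyz ?_
      rw [← hxz q' σ' j h hh, ← hxF _ (hτF _ (mul_mem_smul_mul h1Δ _ hh))]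
      refine (hxy q σ _ (hτF _ (mul_mem_smul_mul h1Δ _ hh)) fun k hk => ?_).symm
      refine Finset.disjoint_left.1 (hτ fun hk' => ?_) (Finset.smul_mem_smul_finset hh) hk
      obtain ⟨rfl, h'⟩ := Prod.mk.injEq _ _ _ _ ▸ hk'
      exact hne h'.symm
    refine Prod.ext (Subtype.ext ?_) rfl
    rw [← hyq q, ← hyq q']
    funext ⟨g, hg⟩
    by_cases hsel : ∃ j, g ∈ τ (j, σ j) • (Ω * Δ)
    · obtain ⟨j, hj⟩ := hsel
      obtain ⟨d, hd, rfl⟩ := Finset.mem_smul_finset.1 hj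
      exact congrFun (congrFun hv j) ⟨d, hd⟩
    · simp only [Finset.restrict]
      rw [← hxy q σ g hg (not_exists.1 hsel), ← hxy q' σ g hg (not_exists.1 hsel), hxF g hg]
  have := Nat.card_le_card_of_injective Ψ hΨ
  simpa [Nat.card_prod, Nat.card_fun, Nat.card_eq_finsetCard] using this

theorem exists_ncard_restrict_mul_two_pow_le [Finite A] [Infinite G] (net : FolnerNet G)
    (hX : DeltaIrreducible X Δ) (h1Δ : (1 : G) ∈ Δ) {Y : Set (G → A)} (hYX : Y ⊆ X)
    {z : G → A} (hz : ∀ g, shift g z ∈ X) {Ω : Finset G} (hYz : OmitsPattern Y Ω z)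
    (E : Finset G) : ∃ F : Finset G,
      (F.restrict '' Y).ncard * 2 ^ (Nat.card A * ((F * E) \ F).card + 1) ≤
        (F.restrict '' X).ncard := by
  have : Nonempty A := ⟨z 1⟩
  set m := 2 * Nat.card A ^ (Ω * Δ).card
  obtain ⟨F, J, hJF, hJ, hJcard⟩ := net.exists_separated_tiles Ω (Ω * Δ) E (m * Nat.card A) m
  set t := Nat.card A * ((F * E) \ F).card + 1
  obtain ⟨τ⟩ : Nonempty (Fin t × Fin m ↪ J) := Function.Embedding.nonempty_of_card_le <| by
    simp only [Fintype.card_prod, Fintype.card_fin, Fintype.card_coe, t]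
    linarith
  have key := ncard_restrict_mul_pow_le hX h1Δ hYX hz hYz F (fun i => (τ i : G))
    (fun i => hJF _ (τ i).2) fun i j hij =>
      hJ (τ i).2 (τ j).2 fun h => hij (τ.injective (Subtype.ext h))
  refine ⟨F, Nat.le_of_mul_le_mul_right (c := (Nat.card A ^ (Ω * Δ).card) ^ t) ?_
    (pow_pos (pow_pos Nat.card_pos _) _)⟩
  rwa [mul_assoc, ← mul_pow]

theorem surjective_of_injective_on_almostEqual [Finite A] [Infinite G]
    [uA : UniformSpace A] (hdisc : uA = ⊥) (net : FolnerNet G) (hXc : IsClosed X)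
    (hinv : ∀ g, ∀ x ∈ X, shift g x ∈ X) (hX : DeltaIrreducible X Δ) {f : X → X}
    (hf : Continuous f)
    (hequi : ∀ (g : G) (x : X),
      f ⟨shift g x, hinv g x x.2⟩ = ⟨shift g (f x), hinv g (f x) (f x).2⟩)
    (hfin : ∀ x y : X, AlmostEqual (x : G → A) y → f x = f y → x = y) :
    Function.Surjective f := by
  have := discreteTopology_of_eq_bot hdisc
  have := compactSpace_of_isClosed hdisc hXc
  intro w
  by_contra hw
  set Y := Set.range fun x => (f x : G → A)
  have hYinv : ∀ g, ∀ y ∈ Y, shift g y ∈ Y := by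
    rintro g _ ⟨x, rfl⟩
    exact ⟨_, congrArg Subtype.val (hequi g x)⟩
  obtain ⟨Ω, hΩ⟩ := exists_omitsPattern_of_notMem hdisc
    (isCompact_range (continuous_subtype_val.comp hf)).isClosed hYinv
    fun ⟨x, hx⟩ => hw ⟨x, Subtype.ext hx⟩
  obtain ⟨S, hS⟩ := exists_memory_set hdisc hXc hinv hf hequi
  have hX₁ := hX.mono (Finset.subset_insert 1 Δ)
  set E := insert 1 (insert 1 Δ * S⁻¹)
  obtain ⟨F, hF⟩ := exists_ncard_restrict_mul_two_pow_le net hX₁ (Finset.mem_insert_self 1 Δ)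
    (Set.range_subset_iff.2 fun x => (f x).2) (fun g => hinv g w w.2) hΩ E
  have hXY := ncard_restrict_le_ncard_restrict_range hdisc hX₁ hXc hS hfin w.2 F
    (Finset.subset_insert 1 _)
  have hY := ncard_restrict_image_le_mul Y
    (Finset.subset_mul_left F (t := E) (Finset.mem_insert_self _ _))
  have hP : 0 < (F.restrict '' X).ncard := (Set.ncard_pos (Set.toFinite _)).2 ⟨_, w, w.2, rfl⟩
  set b := ((F * E) \ F).card
  have : (F.restrict '' X).ncard * 2 ^ (Nat.card A * b + 1) ≤
      (F.restrict '' X).ncard * Nat.card A ^ b :=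
    calc _ ≤ (F.restrict '' Y).ncard * Nat.card A ^ b * 2 ^ (Nat.card A * b + 1) :=
          Nat.mul_le_mul_right _ (hXY.trans hY)
      _ = (F.restrict '' Y).ncard * 2 ^ (Nat.card A * b + 1) * Nat.card A ^ b := by ring
      _ ≤ _ := Nat.mul_le_mul_right _ hF
  exact (Nat.le_of_mul_le_mul_left this hP).not_gt (pow_lt_two_pow_mul_add_one _ _)

end Subshift

/-- Myhill property for strongly irreducible subshifts over amenable groups:
every pre-injective continuous `G`-equivariant self-map of `X` is surjective;
in particular every injective one is surjective. -/
theorem myhill_strongly_irreducible {G A : Type*} [Group G] [Finite A]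
    [uA : UniformSpace A] (hdisc : uA = ⊥)
    (hamen : Nonempty (FolnerNet G))
    (X : Set (G → A)) (hclosed : IsClosed X)
    (hinv : ∀ (g : G), ∀ x ∈ X, shift g x ∈ X)
    (hirr : StronglyIrreducible X) :
    (∀ f : ↥X → ↥X, Continuous f →
      (∀ (g : G) (x : ↥X),
        f ⟨shift g ↑x, hinv g ↑x x.2⟩ = ⟨shift g ↑(f x), hinv g ↑(f x) (f x).2⟩) →
      (∀ x y : ↥X,
        (∀ U ∈ 𝓤 ↥X, ∃ Ω : Finset G, ∀ g : G, g ∉ Ω →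
          ((⟨shift g ↑x, hinv g ↑x x.2⟩ : ↥X), (⟨shift g ↑y, hinv g ↑y y.2⟩ : ↥X)) ∈ U) →
        f x = f y → x = y) →
      Function.Surjective f) ∧
    (∀ f : ↥X → ↥X, Continuous f →
      (∀ (g : G) (x : ↥X),
        f ⟨shift g ↑x, hinv g ↑x x.2⟩ = ⟨shift g ↑(f x), hinv g ↑(f x) (f x).2⟩) →
      Function.Injective f → Function.Surjective f) := by
  classical
  have key (f : X → X) (hf : Continuous f)
      (hequi : ∀ (g : G) (x : X),
        f ⟨shift g x, hinv g x x.2⟩ = ⟨shift g (f x), hinv g (f x) (f x).2⟩)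
      (hfin : ∀ x y : X, AlmostEqual (x : G → A) y → f x = f y → x = y) :
      Function.Surjective f := by
    rcases finite_or_infinite G with hG | hG
    · have := Fintype.ofFinite G
      exact Finite.injective_iff_surjective.1 fun x y => hfin x y ⟨Finset.univ, by simp⟩
    · obtain ⟨Δ, hΔ⟩ := hirr
      exact surjective_of_injective_on_almostEqual hdisc hamen.some hclosed hinv hΔ hf
        hequi hfin
  exact ⟨fun f hf hequi hpre => key f hf hequi fun x y hxy =>
      hpre x y (homoclinic_of_almostEqual hdisc hinv hxy),
    fun f hf hequi hinj => key f hf hequi fun x y _ => @hinj x y⟩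
end

section
/- (Bryant–Eisenberg) Let X be a compact Hausdorff space equipped with an expansive continuous action of a countable group G. Then X is metrizable. -/
open scoped Uniformity Topology

/-- The action of `G` on the uniform space `X` is expansive. -/
def ExpansiveAction (G X : Type*) [SMul G X] [UniformSpace X] : Prop :=
  ∃ U₀ ∈ 𝓤 X, ∀ x y : X, x ≠ y → ∃ g : G, (g • x, g • y) ∉ U₀

/-- Bryant–Eisenberg: a compact Hausdorff space admitting an expansive continuous action
of a countable group is metrizable. -/
theorem bryant_eisenberg {G X : Type*} [Group G] [Countable G]
    [UniformSpace X] [CompactSpace X] [T2Space X] [MulAction G X]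
    (hcont : ∀ g : G, Continuous fun x : X => g • x)
    (hexp : ExpansiveAction G X) :
    TopologicalSpace.MetrizableSpace X := by
  obtain ⟨U₀, hU₀, hsep⟩ := hexp
  -- shrink U₀ to a closed entourage
  obtain ⟨U₁, ⟨hU₁, hU₁c⟩, hU₁sub⟩ :=
    (uniformity_hasBasis_closed (α := X)).mem_iff.mp hU₀
  set V : G → Set (X × X) := fun g => (Prod.map (fun x : X => g • x) (fun x : X => g • x)) ⁻¹' U₁
    with hV
  have hVmem : ∀ g, V g ∈ 𝓤 X := by
    intro g
    have hu : UniformContinuous (fun x : X => g • x) :=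
      CompactSpace.uniformContinuous_of_continuous (hcont g)
    exact hu hU₁
  have hVclosed : ∀ g, IsClosed (V g) :=
    fun g => hU₁c.preimage ((hcont g).prodMap (hcont g))
  -- the uniformity equals the infimum of the principal filters of the V g
  have key : 𝓤 X = ⨅ g : G, Filter.principal (V g) := by
    apply le_antisymm
    · exact le_iInf fun g => Filter.le_principal_iff.mpr (hVmem g)
    · intro S hS
      have hS' : S ∈ 𝓝ˢ (Set.diagonal X) := by
        rwa [nhdsSet_diagonal_eq_uniformity]
      obtain ⟨O, hOopen, hdiagO, hOS⟩ := mem_nhdsSet_iff_exists.mp hS'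
      -- Oᶜ is compact and covered by the (V g)ᶜ
      have hcov : Oᶜ ⊆ ⋃ g : G, (V g)ᶜ := by
        rintro ⟨x, y⟩ hp
        have hxy : x ≠ y := by
          intro h
          exact hp (hdiagO (by simp [Set.diagonal, h]))
        obtain ⟨g, hg⟩ := hsep x y hxy
        exact Set.mem_iUnion.mpr ⟨g, fun hmem => hg (hU₁sub hmem)⟩
      have hcomp : IsCompact (Oᶜ) := (hOopen.isClosed_compl).isCompact
      obtain ⟨T, hT⟩ := hcomp.elim_finite_subcover (fun g => (V g)ᶜ)
        (fun g => (hVclosed g).isOpen_compl) hcov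
      have hsub : (⋂ g ∈ T, V g) ⊆ O := by
        intro p hp
        by_contra hpO
        obtain ⟨g, hgT, hg⟩ := Set.mem_iUnion₂.mp (hT hpO)
        exact hg (Set.mem_iInter₂.mp hp g hgT)
      have hmem : (⋂ g ∈ T, V g) ∈ ⨅ g : G, Filter.principal (V g) := by
        refine (Filter.biInter_finset_mem T).mpr fun g _ => ?_
        exact Filter.mem_iInf_of_mem g (Filter.mem_principal_self _)
      exact Filter.mem_of_superset hmem (hsub.trans hOS)
  haveI : (𝓤 X).IsCountablyGenerated := by
    rw [key]; infer_instance
  exact UniformSpace.metrizableSpace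
end

section
/- Let X be a compact Hausdorff space equipped with an expansive continuous action of a group G, and let U₀ be a closed expansiveness entourage for (X,G). Then for every entourage U of X there exists a finite subset E ⊂ G such that ⋂_{g∈E} g⁻¹U₀ ⊂ U, where g⁻¹U₀ := {(x,y) ∈ X × X : (g·x, g·y) ∈ U₀}. -/
open scoped Uniformity

/-!
Each set `g⁻¹U₀` is closed in the compact space `X × X`, and by expansiveness their intersection
over all of `G` is the diagonal, which lies in the open set `interior U`. By compactness, finitely
many of them already have their intersection inside `interior U`.
-/

open Set

theorem CompactSpace.exists_finset_biInter_subset_of_iInter_subset {X ι : Type*}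
    [TopologicalSpace X] [CompactSpace X] {t : ι → Set X} (htc : ∀ i, IsClosed (t i))
    {V : Set X} (hV : IsOpen V) (htV : ⋂ i, t i ⊆ V) : ∃ u : Finset ι, ⋂ i ∈ u, t i ⊆ V := by
  obtain ⟨u, hu⟩ := hV.isClosed_compl.isCompact.elim_finite_subfamily_closed t htc
    (by rwa [inter_comm, ← sdiff_eq, sdiff_eq_empty])
  exact ⟨u, by rwa [inter_comm, ← sdiff_eq, sdiff_eq_empty] at hu⟩

theorem iInter_preimage_smul_subset_diagonal {G X : Type*} [SMul G X] {U₀ : Set (X × X)}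
    (hexp : ∀ x y : X, x ≠ y → ∃ g : G, (g • x, g • y) ∉ U₀) :
    ⋂ g : G, {p : X × X | (g • p.1, g • p.2) ∈ U₀} ⊆ diagonal X := by
  intro p hp
  by_contra hne
  obtain ⟨g, hg⟩ := hexp p.1 p.2 hne
  exact hg (mem_iInter.1 hp g)

theorem diagonal_subset_interior_of_mem_uniformity {X : Type*} [UniformSpace X]
    {U : Set (X × X)} (hU : U ∈ 𝓤 X) : diagonal X ⊆ interior U :=
  fun _ hp => mem_uniformity_of_eq (interior_mem_uniformity hU) hp

theorem expansive_base_entourages_general {G X : Type*} [Group G]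
    [UniformSpace X] [CompactSpace X] [MulAction G X]
    (hcont : ∀ g : G, Continuous fun x : X => g • x)
    (U₀ : Set (X × X)) (hU₀closed : IsClosed U₀)
    (hexp : ∀ x y : X, x ≠ y → ∃ g : G, (g • x, g • y) ∉ U₀)
    (U : Set (X × X)) (hU : U ∈ 𝓤 X) :
    ∃ E : Finset G, (⋂ g ∈ E, {p : X × X | (g • p.1, g • p.2) ∈ U₀}) ⊆ U := by
  have hclosed : ∀ g : G, IsClosed {p : X × X | (g • p.1, g • p.2) ∈ U₀} := fun g =>
    hU₀closed.preimage (((hcont g).comp continuous_fst).prodMk ((hcont g).comp continuous_snd))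
  obtain ⟨E, hE⟩ := CompactSpace.exists_finset_biInter_subset_of_iInter_subset hclosed
    isOpen_interior ((iInter_preimage_smul_subset_diagonal hexp).trans
      (diagonal_subset_interior_of_mem_uniformity hU))
  exact ⟨E, hE.trans interior_subset⟩

/-- If `U₀` is a closed expansiveness entourage for an expansive continuous action of a
group `G` on a compact Hausdorff space `X`, then the entourages `⋂_{g ∈ E} g⁻¹U₀`, for
`E ⊆ G` finite, form a base of entourages of `X`. -/
theorem expansive_base_entourages {G X : Type*} [Group G]
    [UniformSpace X] [CompactSpace X] [T2Space X] [MulAction G X]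
    (hcont : ∀ g : G, Continuous fun x : X => g • x)
    (U₀ : Set (X × X)) (hU₀ : U₀ ∈ 𝓤 X) (hU₀closed : IsClosed U₀)
    (hexp : ∀ x y : X, x ≠ y → ∃ g : G, (g • x, g • y) ∉ U₀)
    (U : Set (X × X)) (hU : U ∈ 𝓤 X) :
    ∃ E : Finset G, (⋂ g ∈ E, {p : X × X | (g • p.1, g • p.2) ∈ U₀}) ⊆ U :=
  expansive_base_entourages_general hcont U₀ hU₀closed hexp U hU
end

section
/- Let X be a compact uniform space equipped with a uniformly continuous action of a group G. Let U and V be entourages of X with V symmetric and V ∘ V ⊂ U. Let α be a finite open cover of X such that for every A ∈ α there exists x ∈ X with A ⊂ V[x], and let F ⊂ G be a finite subset. Then sep(X,G,F,U) ≤ N(α^(F)). -/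
open scoped Uniformity

/-- `coverNum α` is the minimal cardinality `N(α)` of a subcover of the cover `α`. -/
noncomputable def coverNum {X : Type*} (α : Set (Set X)) : ℕ :=
  sInf {n : ℕ | ∃ β : Finset (Set X), (β : Set (Set X)) ⊆ α ∧ β.card = n ∧
    ⋃₀ (β : Set (Set X)) = Set.univ}

/-- `coverJoin α F` is the cover `α^(F) = ⋁_{g ∈ F} g⁻¹α`. -/
def coverJoin {G X : Type*} [SMul G X] (α : Set (Set X)) (F : Set G) : Set (Set X) :=
  {B | ∃ A : G → Set X, (∀ g ∈ F, A g ∈ α) ∧ B = ⋂ g ∈ F, (fun x => g • x) ⁻¹' A g}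

/-- `dynEnt U F = U^(F) = {(x,y) : (g•x, g•y) ∈ U for all g ∈ F}`. -/
def dynEnt {G X : Type*} [SMul G X] (U : Set (X × X)) (F : Set G) : Set (X × X) :=
  {p | ∀ g ∈ F, (g • p.1, g • p.2) ∈ U}

/-- `sepCard U F = sep(X,G,F,U)`: the maximal cardinality of an `(F,U)`-separated subset. -/
noncomputable def sepCard {G X : Type*} [SMul G X] (U : Set (X × X)) (F : Set G) : ℕ :=
  sSup {n : ℕ | ∃ Z : Finset X, Z.card = n ∧
    ∀ x ∈ Z, ∀ y ∈ Z, x ≠ y → (x, y) ∉ dynEnt U F}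

/-! Points lying in a common member of `α^(F)` have all their `F`-translates in a common
`V`-ball, hence are `U^(F)`-close; an `(F,U)`-separated set thus meets each member of a
minimal subcover of `α^(F)` at most once. -/

theorem mem_of_mem_ball_of_mem_ball {X : Type*} {U V : Set (X × X)}
    (hVsymm : Prod.swap ⁻¹' V = V) (hVVU : SetRel.comp V V ⊆ U) {z x y : X}
    (hx : (z, x) ∈ V) (hy : (z, y) ∈ V) : (x, y) ∈ U := by
  have hx' : (x, z) ∈ V := by rw [← hVsymm]; exact hx
  exact hVVU ⟨z, hx', hy⟩

section coverJoin

variable {G X : Type*} [SMul G X] {α : Set (Set X)} {F : Set G}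

theorem exists_mem_smul_mem_of_mem_coverJoin {B : Set X} (hB : B ∈ coverJoin α F) {g : G}
    (hg : g ∈ F) : ∃ A ∈ α, ∀ x ∈ B, g • x ∈ A := by
  obtain ⟨A, hA, rfl⟩ := hB
  exact ⟨A g, hA g hg, fun x hx => Set.mem_iInter₂.1 hx g hg⟩

theorem sUnion_coverJoin (hαcov : ⋃₀ α = Set.univ) : ⋃₀ coverJoin α F = Set.univ := by
  refine Set.eq_univ_of_forall fun x => ?_
  have hx : ∀ g : G, ∃ A ∈ α, g • x ∈ A := fun g =>
    Set.mem_sUnion.1 (hαcov ▸ Set.mem_univ (g • x))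
  choose A hAα hxA using hx
  exact ⟨⋂ g ∈ F, (fun y => g • y) ⁻¹' A g, ⟨A, fun g _ => hAα g, rfl⟩,
    Set.mem_iInter₂.2 fun g _ => hxA g⟩

theorem isOpen_of_mem_coverJoin [TopologicalSpace X]
    (hcont : ∀ g : G, Continuous (g • · : X → X)) (hαopen : ∀ A ∈ α, IsOpen A)
    (hF : F.Finite) {B : Set X} (hB : B ∈ coverJoin α F) : IsOpen B := by
  obtain ⟨A, hA, rfl⟩ := hB
  exact hF.isOpen_biInter fun g hg => (hαopen _ (hA g hg)).preimage (hcont g)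

theorem prod_mem_dynEnt_of_mem_coverJoin {U V : Set (X × X)} (hVsymm : Prod.swap ⁻¹' V = V)
    (hVVU : SetRel.comp V V ⊆ U) (hsmall : ∀ A ∈ α, ∃ z : X, A ⊆ {y : X | (z, y) ∈ V})
    {B : Set X} (hB : B ∈ coverJoin α F) {x y : X} (hx : x ∈ B) (hy : y ∈ B) :
    (x, y) ∈ dynEnt U F := by
  intro g hg
  obtain ⟨A, hAα, hBA⟩ := exists_mem_smul_mem_of_mem_coverJoin hB hg
  obtain ⟨z, hAz⟩ := hsmall A hAα
  exact mem_of_mem_ball_of_mem_ball hVsymm hVVU (hAz (hBA x hx)) (hAz (hBA y hy))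

end coverJoin

theorem exists_subcover_card_eq_coverNum {X : Type*} [TopologicalSpace X] [CompactSpace X]
    {α : Set (Set X)} (hαopen : ∀ A ∈ α, IsOpen A) (hαcov : ⋃₀ α = Set.univ) :
    ∃ β : Finset (Set X), (β : Set (Set X)) ⊆ α ∧ β.card = coverNum α ∧
      ⋃₀ (β : Set (Set X)) = Set.univ := by
  obtain ⟨β, hβα, hβfin, hβcov⟩ := isCompact_univ.elim_finite_subcover_image (c := id) hαopen
    (by simp only [id, ← Set.sUnion_eq_biUnion, hαcov, subset_refl])
  have hβcov' : ⋃₀ (hβfin.toFinset : Set (Set X)) = Set.univ := by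
    rw [hβfin.coe_toFinset, Set.sUnion_eq_biUnion]
    exact Set.univ_subset_iff.1 hβcov
  exact Nat.sInf_mem (s := {n | ∃ β : Finset (Set X), (β : Set (Set X)) ⊆ α ∧ β.card = n ∧
    ⋃₀ (β : Set (Set X)) = Set.univ}) ⟨_, hβfin.toFinset, by simpa using hβα, rfl, hβcov'⟩

theorem sepCard_le_card_of_sUnion_eq_univ {G X : Type*} [SMul G X] {U : Set (X × X)}
    {F : Set G} (β : Finset (Set X)) (hβcov : ⋃₀ (β : Set (Set X)) = Set.univ)
    (hβ : ∀ B ∈ β, ∀ x ∈ B, ∀ y ∈ B, (x, y) ∈ dynEnt U F) : sepCard U F ≤ β.card := by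
  refine csSup_le ⟨0, ∅, rfl, by simp⟩ ?_
  rintro _ ⟨Z, rfl, hZ⟩
  have hx : ∀ x : X, ∃ B ∈ β, x ∈ B := fun x =>
    Set.mem_sUnion.1 (hβcov ▸ Set.mem_univ x)
  choose f hfβ hxf using hx
  refine Finset.card_le_card_of_injOn f (fun x _ => hfβ x) fun x hx y hy hxy => ?_
  by_contra hne
  exact hZ x hx y hy hne (hβ (f x) (hfβ x) x (hxf x) y (hxy ▸ hxf y))

theorem sepCard_le_coverNum_general {G X : Type*} [Group G]
    [UniformSpace X] [CompactSpace X] [MulAction G X]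
    (hcont : ∀ g : G, UniformContinuous fun x : X => g • x)
    (U V : Set (X × X))
    (hVsymm : Prod.swap ⁻¹' V = V) (hVVU : SetRel.comp V V ⊆ U)
    (α : Set (Set X)) (hαopen : ∀ A ∈ α, IsOpen A)
    (hαcov : ⋃₀ α = Set.univ)
    (hsmall : ∀ A ∈ α, ∃ x : X, A ⊆ {y : X | (x, y) ∈ V})
    (F : Set G) (hF : F.Finite) :
    sepCard (G := G) U F ≤ coverNum (coverJoin α F) := by
  obtain ⟨β, hβα, hβcard, hβcov⟩ := exists_subcover_card_eq_coverNum
    (fun _ => isOpen_of_mem_coverJoin (fun g => (hcont g).continuous) hαopen hF)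
    (sUnion_coverJoin hαcov)
  rw [← hβcard]
  exact sepCard_le_card_of_sUnion_eq_univ β hβcov fun B hB _ hx _ hy =>
    prod_mem_dynEnt_of_mem_coverJoin hVsymm hVVU hsmall (hβα hB) hx hy

/-- If `V` is a symmetric entourage with `V ∘ V ⊆ U` and every member of the finite open
cover `α` is contained in some `V[x]`, then `sep(X,G,F,U) ≤ N(α^(F))`. -/
theorem sepCard_le_coverNum {G X : Type*} [Group G]
    [UniformSpace X] [CompactSpace X] [MulAction G X]
    (hcont : ∀ g : G, UniformContinuous fun x : X => g • x)
    (U V : Set (X × X)) (hU : U ∈ 𝓤 X) (hV : V ∈ 𝓤 X)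
    (hVsymm : Prod.swap ⁻¹' V = V) (hVVU : SetRel.comp V V ⊆ U)
    (α : Set (Set X)) (hαfin : α.Finite) (hαopen : ∀ A ∈ α, IsOpen A)
    (hαcov : ⋃₀ α = Set.univ)
    (hsmall : ∀ A ∈ α, ∃ x : X, A ⊆ {y : X | (x, y) ∈ V})
    (F : Set G) (hF : F.Finite) :
    sepCard (G := G) U F ≤ coverNum (coverJoin α F) :=
  sepCard_le_coverNum_general hcont U V hVsymm hVVU α hαopen hαcov hsmall F hF
end

section
/- Let G be a group and let A be a set. Equip A^G with its prodiscrete uniform structure and with the shift action of G. Then two configurations x, y ∈ A^G are homoclinic if and only if they are almost equal, i.e., if and only if the set {g ∈ G : x(g) ≠ y(g)} is finite. -/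
/-!
Homoclinicity means that `(shift g x, shift g y)` tends to the uniformity along the cofinite
filter. The prodiscrete uniformity is tested one coordinate `h` at a time, and the set of `g` for
which the shifts disagree at `h` is the translate `h • D⁻¹` of the disagreement set `D` of `x`
and `y`, so it is finite exactly when `D` is.
-/

open scoped Uniformity Pointwise
open Filter

theorem exists_finset_forall_notMem_iff_eventually_cofinite {α : Type*} {p : α → Prop} :
    (∃ Ω : Finset α, ∀ a, a ∉ Ω → p a) ↔ ∀ᶠ a in cofinite, p a := by
  rw [eventually_cofinite]
  constructor
  · rintro ⟨Ω, hΩ⟩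
    exact Ω.finite_toSet.subset fun a ha => by_contra fun haΩ => ha (hΩ a haΩ)
  · intro hfin
    exact ⟨hfin.toFinset, fun a ha => by_contra fun hpa => ha (hfin.mem_toFinset.mpr hpa)⟩

theorem Pi.tendsto_uniformity_iff {α ι : Type*} {X : ι → Type*} [∀ i, UniformSpace (X i)]
    {l : Filter α} {F : α → (∀ i, X i) × (∀ i, X i)} :
    Tendsto F l (𝓤 (∀ i, X i)) ↔ ∀ i, Tendsto (fun a => ((F a).1 i, (F a).2 i)) l (𝓤 (X i)) := by
  simp only [Pi.uniformity, tendsto_iInf, tendsto_comap_iff, Function.comp_def]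

theorem DiscreteUniformity.tendsto_uniformity_iff {α X : Type*} [UniformSpace X]
    [DiscreteUniformity X] {l : Filter α} {F : α → X × X} :
    Tendsto F l (𝓤 X) ↔ ∀ᶠ a in l, (F a).1 = (F a).2 := by
  rw [DiscreteUniformity.eq_principal_setRelId, tendsto_principal]
  rfl

theorem setOf_shift_apply_ne {G A : Type*} [Group G] (x y : G → A) (h : G) :
    {g | shift g x h ≠ shift g y h} = h • {g | x g ≠ y g}⁻¹ := by
  ext g
  simp [Set.mem_smul_set_iff_inv_smul_mem, shift]

/-- In `A^G` with the prodiscrete uniform structure and the shift action of `G`,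
two configurations are homoclinic if and only if they are almost equal. -/
theorem homoclinic_iff_almost_equal {G A : Type*} [Group G]
    [uA : UniformSpace A] (hdisc : uA = ⊥) (x y : G → A) :
    (∀ U ∈ 𝓤 (G → A), ∃ Ω : Finset G, ∀ g : G, g ∉ Ω → (shift g x, shift g y) ∈ U) ↔
      {g : G | x g ≠ y g}.Finite := by
  have : DiscreteUniformity A := ⟨hdisc⟩
  simp_rw [exists_finset_forall_notMem_iff_eventually_cofinite]
  change Tendsto (fun g => (shift g x, shift g y)) cofinite (𝓤 (G → A)) ↔ _
  simp only [Pi.tendsto_uniformity_iff, DiscreteUniformity.tendsto_uniformity_iff,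
    eventually_cofinite, setOf_shift_apply_ne, Set.finite_smul_set, Set.finite_inv]
  exact forall_const G
end

section
/- Let X be a compact Hausdorff space equipped with an expansive continuous action of a group G, and let U₀ be a closed expansiveness entourage for (X,G). Then for all x, y ∈ X the following are equivalent: (a) x and y are homoclinic; (b) there exists a finite subset Ω₀ ⊂ G such that (g·x, g·y) ∈ U₀ for all g ∈ G ∖ Ω₀. -/
open scoped Uniformity

/-- Two points are homoclinic if their orbits are asymptotically close. -/
def Homoclinic (G : Type*) {X : Type*} [SMul G X] [UniformSpace X] (x y : X) : Prop :=
  ∀ U ∈ 𝓤 X, ∃ Ω : Finset G, ∀ g : G, g ∉ Ω → (g • x, g • y) ∈ U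

/-!
Both conditions say that the orbit pair `g ↦ (g • x, g • y)` eventually lies in an
entourage along the cofinite filter of `G`. Since `X` is compact, entourages are exactly the
neighbourhoods of the diagonal, so it suffices that every cluster point `(a, b)` of the orbit
pair is diagonal. If `a ≠ b`, expansiveness gives `h` with `(h • a, h • b) ∉ U₀`; but
`(h • a, h • b)` is a cluster point of `g ↦ ((h * g) • x, (h * g) • y)`, which eventually lies
in the closed set `U₀`.
-/

open Filter Set

theorem Filter.eventually_cofinite_iff_exists_finset {α : Type*} {p : α → Prop} :
    (∀ᶠ a in cofinite, p a) ↔ ∃ s : Finset α, ∀ a, a ∉ s → p a := by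
  refine ⟨fun h => ?_, fun ⟨s, hs⟩ => s.eventually_cofinite_notMem.mono hs⟩
  refine ⟨(eventually_cofinite.mp h).toFinset, fun a ha => ?_⟩
  by_contra hpa
  exact ha ((eventually_cofinite.mp h).mem_toFinset.mpr hpa)

theorem homoclinic_iff_tendsto_cofinite_uniformity {G X : Type*} [SMul G X]
    [UniformSpace X] {x y : X} :
    Homoclinic G x y ↔ Tendsto (fun g : G => (g • x, g • y)) cofinite (𝓤 X) := by
  simp only [Homoclinic, tendsto_def, ← eventually_cofinite_iff_exists_finset]
  rfl

theorem tendsto_uniformity_of_forall_mapClusterPt {α X : Type*} [UniformSpace X]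
    [CompactSpace X] {l : Filter α} {f : α → X × X} (h : ∀ p, MapClusterPt p l f → p ∈ diagonal X) :
    Tendsto f l (𝓤 X) := by
  rw [← nhdsSet_diagonal_eq_uniformity]
  exact isCompact_univ.tendsto_nhdsSet_of_mapClusterPt (by simp) fun p _ => h p

theorem eq_of_mapClusterPt_of_expansive {G X : Type*} [Group G]
    [TopologicalSpace X] [MulAction G X] (hcont : ∀ g : G, Continuous fun x : X => g • x)
    {U₀ : Set (X × X)} (hU₀closed : IsClosed U₀)
    (hexp : ∀ x y : X, x ≠ y → ∃ g : G, (g • x, g • y) ∉ U₀) {x y : X}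
    (hxy : ∀ᶠ g : G in cofinite, (g • x, g • y) ∈ U₀) {a b : X}
    (hab : MapClusterPt (a, b) cofinite fun g : G => (g • x, g • y)) : a = b := by
  by_contra hne
  obtain ⟨h, hh⟩ := hexp a b hne
  have hcluster :
      MapClusterPt (h • a, h • b) cofinite fun g : G => ((h * g) • x, (h * g) • y) := by
    simpa only [Function.comp_def, Prod.map, mul_smul] using
      hab.continuousAt_comp ((hcont h).prodMap (hcont h)).continuousAt
  have hshift : ∀ᶠ g in cofinite, ((h * g) • x, (h * g) • y) ∈ U₀ :=
    (mul_right_injective h).tendsto_cofinite.eventually hxy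
  exact hh (hU₀closed.mem_of_mapClusterPt hcluster hshift)

theorem homoclinic_iff_expansiveness_entourage_general {G X : Type*} [Group G]
    [UniformSpace X] [CompactSpace X] [MulAction G X]
    (hcont : ∀ g : G, Continuous fun x : X => g • x)
    (U₀ : Set (X × X)) (hU₀ : U₀ ∈ 𝓤 X) (hU₀closed : IsClosed U₀)
    (hexp : ∀ x y : X, x ≠ y → ∃ g : G, (g • x, g • y) ∉ U₀)
    (x y : X) :
    Homoclinic G x y ↔ ∃ Ω₀ : Finset G, ∀ g : G, g ∉ Ω₀ → (g • x, g • y) ∈ U₀ := by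
  rw [homoclinic_iff_tendsto_cofinite_uniformity, ← eventually_cofinite_iff_exists_finset]
  refine ⟨fun h => h hU₀, fun h => tendsto_uniformity_of_forall_mapClusterPt ?_⟩
  rintro ⟨a, b⟩ hab
  exact eq_of_mapClusterPt_of_expansive hcont hU₀closed hexp h hab

/-- For an expansive continuous action on a compact Hausdorff space with closed
expansiveness entourage `U₀`, two points `x, y` are homoclinic if and only if
`(g•x, g•y) ∈ U₀` for all `g` outside a finite subset `Ω₀ ⊆ G`. -/
theorem homoclinic_iff_expansiveness_entourage {G X : Type*} [Group G]
    [UniformSpace X] [CompactSpace X] [T2Space X] [MulAction G X]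
    (hcont : ∀ g : G, Continuous fun x : X => g • x)
    (U₀ : Set (X × X)) (hU₀ : U₀ ∈ 𝓤 X) (hU₀closed : IsClosed U₀)
    (hexp : ∀ x y : X, x ≠ y → ∃ g : G, (g • x, g • y) ∉ U₀)
    (x y : X) :
    Homoclinic G x y ↔ ∃ Ω₀ : Finset G, ∀ g : G, g ∉ Ω₀ → (g • x, g • y) ∈ U₀ :=
  homoclinic_iff_expansiveness_entourage_general hcont U₀ hU₀ hU₀closed hexp x y
end

section
/- Let X and Y be uniform spaces each equipped with a uniformly continuous action of a group G, and suppose there exists a uniformly continuous, G-equivariant, surjective map f : X → Y. If the action of G on X has the weak specification property, then so does the action of G on Y. -/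
open scoped Pointwise Uniformity

/-- `Λ` is a specification subset for the entourage `U`. -/
def IsSpecificationSubset (G X : Type*) [Group G] [SMul G X]
    (U : Set (X × X)) (Λ : Finset G) : Prop :=
  ∀ (ι : Type) (_ : Finite ι) (_ : Nonempty ι) (Ω : ι → Finset G) (x : ι → X),
    (∀ j k : ι, j ≠ k → Disjoint ((Ω j : Set G)) ((Λ : Set G) * (Ω k : Set G))) →
    ∃ y : X, ∀ i : ι, ∀ g ∈ Ω i, (g • y, g • x i) ∈ U

/-- The weak specification property for the action of `G` on the uniform space `X`. -/
def WeakSpecification (G X : Type*) [Group G] [SMul G X] [UniformSpace X] : Prop :=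
  ∀ U ∈ 𝓤 X, ∃ Λ : Finset G, IsSpecificationSubset G X U Λ

/-- The weak specification property passes to uniform factors. -/
theorem weakSpecification_of_factor {G X Y : Type*} [Group G]
    [UniformSpace X] [UniformSpace Y] [MulAction G X] [MulAction G Y]
    (hcX : ∀ g : G, UniformContinuous fun x : X => g • x)
    (hcY : ∀ g : G, UniformContinuous fun y : Y => g • y)
    (f : X → Y) (hf : UniformContinuous f) (hsurj : Function.Surjective f)
    (hequiv : ∀ (g : G) (x : X), f (g • x) = g • f x)
    (hwsp : WeakSpecification G X) :
    WeakSpecification G Y := by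
  intro U hU
  have hV : (Prod.map f f) ⁻¹' U ∈ 𝓤 X := hf hU
  obtain ⟨Λ, hΛ⟩ := hwsp _ hV
  refine ⟨Λ, fun ι hfin hne Ω y hdisj => ?_⟩
  choose x hx using fun i => hsurj (y i)
  obtain ⟨z, hz⟩ := hΛ ι hfin hne Ω x hdisj
  refine ⟨f z, fun i g hg => ?_⟩
  have := hz i g hg
  simpa [Prod.map, hequiv, hx] using this
end

section
/- Let (X_k)_{k∈K} be a (possibly infinite) family of uniform spaces, let G be a group acting on each X_k by uniformly continuous maps, and suppose each action has the weak specification property. Then the diagonal action of G on the product X := ∏_{k∈K} X_k, equipped with the product uniform structure, also has the weak specification property. -/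
open scoped Pointwise Uniformity

/-- A product of actions with the weak specification property has the weak specification
property (for the diagonal action and the product uniform structure). -/
theorem weakSpecification_pi {G K : Type*} [Group G] (X : K → Type*)
    [∀ k, UniformSpace (X k)] [∀ k, MulAction G (X k)]
    (hc : ∀ (k : K) (g : G), UniformContinuous fun x : X k => g • x)
    (h : ∀ k, WeakSpecification G (X k)) :
    WeakSpecification G (∀ k, X k) := by
  classical
  intro U hU
  rw [Pi.uniformity, Filter.mem_iInf] at hU
  obtain ⟨I, hI, V, hV, rfl⟩ := hU
  haveI := hI.fintype
  choose W hW hWV using fun i : I => Filter.mem_comap.mp (hV i)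
  choose Λ hΛ using fun i : I => h i (W i) (hW i)
  refine ⟨Finset.univ.biUnion Λ, ?_⟩
  intro ι hfin hne Ω x hdisj
  choose y hy using fun i : I =>
    hΛ i ι hfin hne Ω (fun j => x j i)
      (fun j k hjk => (hdisj j k hjk).mono_right
        (Set.mul_subset_mul_right
          (Finset.coe_subset.mpr (Finset.subset_biUnion_of_mem Λ (Finset.mem_univ i)))))
  refine ⟨fun k => if hk : k ∈ I then y ⟨k, hk⟩ else x (Classical.arbitrary ι) k, ?_⟩
  intro j g hg
  refine Set.mem_iInter.mpr fun i => hWV i ?_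
  have : (g • fun k => if hk : k ∈ I then y ⟨k, hk⟩ else x (Classical.arbitrary ι) k) i.1
      = g • y i := by
    simp [Pi.smul_apply, i.2]
  simpa [this] using hy i j g hg
end

section
/- Let X be a ultrauniform space equipped with a uniformly continuous action of a group G. Then the action has the weak specification property if and only if it satisfies the following two-piece condition (WSP'): for every entourage U of X there exists a finite subset Λ ⊂ G such that whenever Ω₁ and Ω₂ are finite subsets of G with Ω₁ ∩ ΛΩ₂ = ∅ and x₁, x₂ ∈ X, there exists x ∈ X with (x, x_k) ∈ U^(Ω_k) for k = 1, 2. -/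
open scoped Pointwise Uniformity

/-!
(WSP) ⇒ (WSP'): if `Λ` works for (WSP), then `Λ ∪ Λ⁻¹` works for (WSP'), because for a symmetric
`Λ` the condition `Ω₁ ∩ ΛΩ₂ = ∅` is symmetric in `Ω₁, Ω₂`, so two pieces form a valid family.

(WSP') ⇒ (WSP): given `U`, pick a transitive entourage `V ⊆ U` and `Λ` for `V` in (WSP').
Finitely many pieces are glued one at a time: a point shadowing the first pieces is treated as a
single piece on the union of their index sets, and transitivity of `V` keeps the errors from
accumulating.
-/

/-- The condition of (WSP') for the entourage `U`. -/
def IsTwoPieceSpecificationSubset (G X : Type*) [Group G] [SMul G X]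
    (U : Set (X × X)) (Λ : Finset G) : Prop :=
  ∀ Ω₁ Ω₂ : Finset G, Disjoint (Ω₁ : Set G) ((Λ : Set G) * (Ω₂ : Set G)) →
    ∀ x₁ x₂ : X, ∃ x : X, (∀ g ∈ Ω₁, (g • x, g • x₁) ∈ U) ∧ (∀ g ∈ Ω₂, (g • x, g • x₂) ∈ U)

theorem Set.disjoint_inv_mul_of_disjoint_mul {G : Type*} [Group G] {A B Λ : Set G}
    (h : Disjoint A (Λ * B)) : Disjoint B (Λ⁻¹ * A) := by
  rw [Set.disjoint_left]
  rintro _ hb ⟨l, hl, a, ha, rfl⟩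
  exact Set.disjoint_left.mp h ha ⟨l⁻¹, hl, l * a, hb, by group⟩

section Specification

variable {G X : Type*} [Group G]

theorem IsSpecificationSubset.mono [SMul G X] {U U' : Set (X × X)} {Λ Λ' : Finset G}
    (hΛ : IsSpecificationSubset G X U Λ) (hU : U ⊆ U') (hΛΛ' : Λ ⊆ Λ') :
    IsSpecificationSubset G X U' Λ' := by
  intro ι hι hne Ω x hdisj
  obtain ⟨y, hy⟩ := hΛ ι hι hne Ω x fun j k hjk =>
    (hdisj j k hjk).mono_right (Set.mul_subset_mul_right (Finset.coe_subset.mpr hΛΛ'))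
  exact ⟨y, fun i g hg => hU (hy i g hg)⟩

theorem IsSpecificationSubset.exists_of_disjoint_pair [SMul G X] {U : Set (X × X)}
    {Λ : Finset G} (hΛ : IsSpecificationSubset G X U Λ) {Ω₁ Ω₂ : Finset G}
    (h₁₂ : Disjoint (Ω₁ : Set G) ((Λ : Set G) * (Ω₂ : Set G)))
    (h₂₁ : Disjoint (Ω₂ : Set G) ((Λ : Set G) * (Ω₁ : Set G))) (x₁ x₂ : X) :
    ∃ x : X, (∀ g ∈ Ω₁, (g • x, g • x₁) ∈ U) ∧ (∀ g ∈ Ω₂, (g • x, g • x₂) ∈ U) := by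
  obtain ⟨y, hy⟩ := hΛ Bool inferInstance inferInstance
    (fun b => if b then Ω₁ else Ω₂) (fun b => if b then x₁ else x₂)
    (by intro j k hjk; cases j <;> cases k <;> simp_all)
  exact ⟨y, hy true, hy false⟩

theorem IsSpecificationSubset.isTwoPieceSpecificationSubset [SMul G X] [DecidableEq G]
    {U : Set (X × X)} {Λ : Finset G} (hΛ : IsSpecificationSubset G X U Λ) :
    IsTwoPieceSpecificationSubset G X U (Λ ∪ Λ⁻¹) := by
  have hsymm : ((Λ ∪ Λ⁻¹ : Finset G) : Set G)⁻¹ = (Λ ∪ Λ⁻¹ : Finset G) := by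
    simp only [Finset.coe_union, Finset.coe_inv, Set.union_inv, inv_inv, Set.union_comm]
  intro Ω₁ Ω₂ h₁₂ x₁ x₂
  have h₂₁ := Set.disjoint_inv_mul_of_disjoint_mul h₁₂
  rw [hsymm] at h₂₁
  exact (hΛ.mono subset_rfl Finset.subset_union_left).exists_of_disjoint_pair h₁₂ h₂₁ x₁ x₂

theorem IsTwoPieceSpecificationSubset.exists_forall_mem_finset [MulAction G X]
    {V : Set (X × X)} (hV : SetRel.comp V V ⊆ V) {Λ : Finset G}
    (hΛ : IsTwoPieceSpecificationSubset G X V Λ) {ι : Type*} (Ω : ι → Finset G) (x : ι → X)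
    (hdisj : ∀ j k : ι, j ≠ k → Disjoint ((Ω j : Set G)) ((Λ : Set G) * (Ω k : Set G)))
    {s : Finset ι} (hs : s.Nonempty) :
    ∃ y : X, ∀ i ∈ s, ∀ g ∈ Ω i, (g • y, g • x i) ∈ V := by
  classical
  induction hs using Finset.Nonempty.cons_induction with
  | singleton a =>
    obtain ⟨y, hy, -⟩ := hΛ (Ω a) ∅ (by simp) (x a) (x a)
    exact ⟨y, fun i hi => (Finset.mem_singleton.mp hi) ▸ hy⟩
  | cons a s ha _ ih =>
    obtain ⟨y, hy⟩ := ih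
    have hsep : Disjoint ((s.biUnion Ω : Finset G) : Set G) ((Λ : Set G) * (Ω a : Set G)) := by
      rw [Finset.coe_biUnion, Set.disjoint_iUnion₂_left]
      exact fun i hi => hdisj i a (ne_of_mem_of_not_mem hi ha)
    obtain ⟨z, hzy, hza⟩ := hΛ _ (Ω a) hsep y (x a)
    refine ⟨z, fun i hi g hg => ?_⟩
    rcases Finset.mem_cons.mp hi with rfl | hi
    · exact hza g hg
    · exact hV ⟨g • y, hzy g (Finset.mem_biUnion.mpr ⟨i, hi, hg⟩), hy i hi g hg⟩

theorem IsTwoPieceSpecificationSubset.isSpecificationSubset [MulAction G X]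
    {V : Set (X × X)} (hV : SetRel.comp V V ⊆ V) {Λ : Finset G}
    (hΛ : IsTwoPieceSpecificationSubset G X V Λ) : IsSpecificationSubset G X V Λ := by
  intro ι _ _ Ω x hdisj
  have := Fintype.ofFinite ι
  obtain ⟨y, hy⟩ := hΛ.exists_forall_mem_finset hV Ω x hdisj Finset.univ_nonempty
  exact ⟨y, fun i => hy i (Finset.mem_univ i)⟩

end Specification

theorem weakSpecification_iff_two_pieces_general {G X : Type*} [Group G]
    [UniformSpace X] [MulAction G X]
    (hultra : ∀ U ∈ 𝓤 X, ∃ V ∈ 𝓤 X, V ⊆ U ∧ (∀ p : X × X, p ∈ V → p.swap ∈ V) ∧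
      SetRel.comp V V ⊆ V) :
    WeakSpecification G X ↔
      ∀ U ∈ 𝓤 X, ∃ Λ : Finset G, ∀ Ω₁ Ω₂ : Finset G,
        Disjoint (Ω₁ : Set G) ((Λ : Set G) * (Ω₂ : Set G)) →
        ∀ x₁ x₂ : X, ∃ x : X,
          (∀ g ∈ Ω₁, (g • x, g • x₁) ∈ U) ∧ (∀ g ∈ Ω₂, (g • x, g • x₂) ∈ U) := by
  classical
  constructor
  · intro hWSP U hU
    obtain ⟨Λ, hΛ⟩ := hWSP U hU
    exact ⟨Λ ∪ Λ⁻¹, hΛ.isTwoPieceSpecificationSubset⟩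
  · intro hWSP' U hU
    obtain ⟨V, hV, hVU, -, hVtrans⟩ := hultra U hU
    obtain ⟨Λ, hΛ⟩ := hWSP' V hV
    exact ⟨Λ, (IsTwoPieceSpecificationSubset.isSpecificationSubset hVtrans hΛ).mono hVU
      subset_rfl⟩

/-- On a ultrauniform space (i.e., whose uniformity has a base of entourages that are
graphs of equivalence relations), the weak specification property is equivalent to its
two-piece version (WSP'). -/
theorem weakSpecification_iff_two_pieces {G X : Type*} [Group G]
    [UniformSpace X] [MulAction G X]
    (hcont : ∀ g : G, UniformContinuous fun x : X => g • x)
    (hultra : ∀ U ∈ 𝓤 X, ∃ V ∈ 𝓤 X, V ⊆ U ∧ (∀ p : X × X, p ∈ V → p.swap ∈ V) ∧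
      SetRel.comp V V ⊆ V) :
    WeakSpecification G X ↔
      ∀ U ∈ 𝓤 X, ∃ Λ : Finset G, ∀ Ω₁ Ω₂ : Finset G,
        Disjoint (Ω₁ : Set G) ((Λ : Set G) * (Ω₂ : Set G)) →
        ∀ x₁ x₂ : X, ∃ x : X,
          (∀ g ∈ Ω₁, (g • x, g • x₁) ∈ U) ∧ (∀ g ∈ Ω₂, (g • x, g • x₂) ∈ U) :=
  weakSpecification_iff_two_pieces_general hultra
end

section
/- Let A be a uniform space and let G be a group. Equip A^G with the product uniform structure and the shift action of G. If X ⊂ A^G is a strongly irreducible G-invariant subset, then the action of G on X (with the induced uniform structure) has the weak specification property. In particular, the full shift (A^G, G) has the weak specification property. -/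
open scoped Pointwise Uniformity

/-- The weak specification property for a (not necessarily instance-given) action
`act : G → X → X` with respect to a uniformity filter `u` on `X × X`. -/
def WeakSpecificationOn {G X : Type*} [Group G] (u : Filter (X × X)) (act : G → X → X) : Prop :=
  ∀ U ∈ u, ∃ Λ : Finset G,
    ∀ (ι : Type) (_ : Finite ι) (_ : Nonempty ι) (Ω : ι → Finset G) (x : ι → X),
      (∀ j k : ι, j ≠ k → Disjoint ((Ω j : Set G)) ((Λ : Set G) * (Ω k : Set G))) →
      ∃ y : X, ∀ i : ι, ∀ g ∈ Ω i, (act g y, act g (x i)) ∈ U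

/-! Fix an entourage `U` of `A^G`; it contains all pairs agreeing on some finite `F ⊆ G`.
For `g • y` to be `U`-close to `g • xᵢ` for all `g ∈ Ωᵢ` it then suffices that `y = xᵢ` on
the finite window `Ωᵢ⁻¹F`. With `Λ = FΔ⁻¹F⁻¹`, the condition `Ωⱼ ∩ ΛΩₖ = ∅` implies
`Ωⱼ⁻¹F ∩ Ωₖ⁻¹FΔ = ∅`, so the windows can be filled one after the other by
`Δ`-irreducibility. The full shift is `{1}`-irreducible. -/

theorem exists_finset_forall_eq_imp_mem_of_mem_pi_uniformity {ι : Type*} {A : ι → Type*}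
    [∀ i, UniformSpace (A i)] {V : Set ((∀ i, A i) × (∀ i, A i))} (hV : V ∈ 𝓤 (∀ i, A i)) :
    ∃ F : Finset ι, ∀ y z : ∀ i, A i, (∀ i ∈ F, y i = z i) → (y, z) ∈ V := by
  rw [Pi.uniformity, Filter.mem_iInf'] at hV
  obtain ⟨I, hI, W, hW, -, rfl, -⟩ := hV
  refine ⟨hI.toFinset, fun y z hyz => Set.mem_iInter₂.2 fun i hi => ?_⟩
  obtain ⟨u, hu, hWu⟩ := Filter.mem_comap.1 (hW i)
  apply hWu
  simp only [Set.mem_preimage, hyz i (hI.mem_toFinset.2 hi)]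
  exact refl_mem_uniformity hu

theorem disjoint_inv_mul_mul_of_disjoint_mul {G : Type*} [Group G] {s t F Δ : Set G}
    (h : Disjoint s (F * Δ⁻¹ * F⁻¹ * t)) : Disjoint (s⁻¹ * F) (t⁻¹ * F * Δ) := by
  refine Set.disjoint_left.2 ?_
  rintro _ ⟨a, ha, f, hf, rfl⟩ ⟨_, ⟨b, hb, f', hf', rfl⟩, d, hd, heq⟩
  have ha_eq : a⁻¹ = f * d⁻¹ * f'⁻¹ * b⁻¹ := by
    rw [eq_mul_inv_of_mul_eq heq.symm]
    group
  refine Set.disjoint_left.1 h (Set.mem_inv.1 ha) ?_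
  rw [ha_eq]
  exact Set.mul_mem_mul (Set.mul_mem_mul (Set.mul_mem_mul hf (Set.inv_mem_inv.2 hd))
    (Set.inv_mem_inv.2 hf')) (Set.mem_inv.1 hb)

section Irreducible

variable {G A : Type*} [Group G]

/-- `X` is `Δ`-irreducible; `StronglyIrreducible X` unfolds to `∃ Δ, IrreducibleWith Δ X`. -/
def IrreducibleWith (Δ : Finset G) (X : Set (G → A)) : Prop :=
  ∀ Ω₁ Ω₂ : Finset G, Disjoint (Ω₁ : Set G) ((Ω₂ : Set G) * (Δ : Set G)) →
    ∀ x₁ ∈ X, ∀ x₂ ∈ X, ∃ x ∈ X, (∀ g ∈ Ω₁, x g = x₁ g) ∧ (∀ g ∈ Ω₂, x g = x₂ g)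

theorem irreducibleWith_one_univ : IrreducibleWith {1} (Set.univ : Set (G → A)) := by
  classical
  intro Ω₁ Ω₂ hΩ x₁ _ x₂ _
  rw [Finset.coe_singleton, Set.singleton_one, mul_one] at hΩ
  refine ⟨(Ω₁ : Set G).piecewise x₁ x₂, trivial, fun g hg => Set.piecewise_eq_of_mem _ _ _ hg,
    fun g hg => Set.piecewise_eq_of_notMem _ _ _ (Set.disjoint_right.1 hΩ hg)⟩

theorem IrreducibleWith.exists_forall_eq {Δ : Finset G} {X : Set (G → A)}
    (hX : IrreducibleWith Δ X) {ι : Type*} {s : Finset ι} (hs : s.Nonempty) (Ψ : ι → Finset G)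
    (hΨ : (s : Set ι).Pairwise fun j k => Disjoint (Ψ j : Set G) ((Ψ k : Set G) * Δ))
    (x : ι → G → A) (hx : ∀ i, x i ∈ X) :
    ∃ y ∈ X, ∀ i ∈ s, ∀ g ∈ Ψ i, y g = x i g := by
  classical
  induction hs using Finset.Nonempty.cons_induction with
  | singleton a => exact ⟨x a, hx a, fun i hi _ _ => by rw [Finset.mem_singleton.1 hi]⟩
  | cons a t ha _ ih =>
    rw [Finset.coe_cons] at hΨ
    obtain ⟨y₀, hy₀X, hy₀⟩ := ih (hΨ.mono (Set.subset_insert _ _))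
    have hdisj : Disjoint (Ψ a : Set G) (((t.biUnion Ψ : Finset G) : Set G) * Δ) := by
      rw [Finset.coe_biUnion, Set.iUnion₂_mul, Set.disjoint_iUnion₂_right]
      exact fun k hk => hΨ (Set.mem_insert _ _) (Set.mem_insert_of_mem _ hk)
        (ne_of_mem_of_not_mem hk ha).symm
    obtain ⟨y, hyX, hya, hyt⟩ := hX _ _ hdisj (x a) (hx a) y₀ hy₀X
    refine ⟨y, hyX, fun i hi g hg => ?_⟩
    rcases Finset.mem_cons.1 hi with rfl | hi
    · exact hya g hg
    · rw [hyt g (Finset.mem_biUnion.2 ⟨i, hi, hg⟩), hy₀ i hi g hg]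

theorem IrreducibleWith.exists_forall_shift_mem [UniformSpace A] {Δ : Finset G}
    {X : Set (G → A)} (hX : IrreducibleWith Δ X) {V : Set ((G → A) × (G → A))}
    (hV : V ∈ 𝓤 (G → A)) :
    ∃ Λ : Finset G, ∀ (ι : Type) [Finite ι] [Nonempty ι] (Ω : ι → Finset G) (x : ι → G → A),
      (∀ i, x i ∈ X) →
      (∀ j k : ι, j ≠ k → Disjoint (Ω j : Set G) ((Λ : Set G) * (Ω k : Set G))) →
      ∃ y ∈ X, ∀ i, ∀ g ∈ Ω i, (shift g y, shift g (x i)) ∈ V := by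
  classical
  obtain ⟨F, hF⟩ := exists_finset_forall_eq_imp_mem_of_mem_pi_uniformity hV
  refine ⟨F * Δ⁻¹ * F⁻¹, fun ι _ _ Ω x hx hΩ => ?_⟩
  have : Fintype ι := Fintype.ofFinite ι
  have hΨ : ((Finset.univ : Finset ι) : Set ι).Pairwise fun j k =>
      Disjoint (((Ω j)⁻¹ * F : Finset G) : Set G) ((((Ω k)⁻¹ * F : Finset G) : Set G) * Δ) := by
    intro j _ k _ hjk
    push_cast
    exact disjoint_inv_mul_mul_of_disjoint_mul (by exact_mod_cast hΩ j k hjk)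
  obtain ⟨y, hyX, hy⟩ := hX.exists_forall_eq Finset.univ_nonempty _ hΨ x hx
  exact ⟨y, hyX, fun i g hg => hF _ _ fun h hh =>
    hy i (Finset.mem_univ i) _ (Finset.mul_mem_mul (Finset.inv_mem_inv hg) hh)⟩

end Irreducible

/-- A strongly irreducible `G`-invariant subset `X ⊆ A^G` (with `A` a uniform space and
`A^G` carrying the product uniform structure) has the weak specification property for the
shift action; in particular, the full shift `A^G` has the weak specification property. -/
theorem stronglyIrreducible_weakSpecification {G A : Type*} [Group G] [UniformSpace A]
    (X : Set (G → A)) (hinv : ∀ (g : G), ∀ x ∈ X, shift g x ∈ X)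
    (hirr : StronglyIrreducible X) :
    WeakSpecificationOn (𝓤 ↥X)
      (fun g (x : ↥X) => (⟨shift g ↑x, hinv g ↑x x.2⟩ : ↥X)) ∧
    WeakSpecificationOn (𝓤 (G → A)) shift := by
  obtain ⟨Δ, hΔ⟩ := hirr
  refine ⟨fun U hU => ?_, fun U hU => ?_⟩
  · rw [uniformity_subtype] at hU
    obtain ⟨V, hV, hVU⟩ := Filter.mem_comap.1 hU
    obtain ⟨Λ, hΛ⟩ := IrreducibleWith.exists_forall_shift_mem hΔ hV
    refine ⟨Λ, fun ι _ _ Ω x hΩ => ?_⟩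
    obtain ⟨y, hyX, hy⟩ := hΛ ι Ω (fun i => x i) (fun i => (x i).2) hΩ
    exact ⟨⟨y, hyX⟩, fun i g hg => hVU (hy i g hg)⟩
  · obtain ⟨Λ, hΛ⟩ := irreducibleWith_one_univ.exists_forall_shift_mem hU
    refine ⟨Λ, fun ι _ _ Ω x hΩ => ?_⟩
    obtain ⟨y, -, hy⟩ := hΛ ι Ω x (fun _ => trivial) hΩ
    exact ⟨y, hy⟩
end

section
/- Let G be a group and let A be a set. Equip A^G with the prodiscrete uniform structure and the shift action of G, and let X ⊂ A^G be a G-invariant subset. Then X is strongly irreducible if and only if the shift action of G on X (with the induced uniform structure) has the weak specification property. -/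
/-!
Entourages of the prodiscrete uniformity on `X` are generated by the relations "agree on a finite
set `Ω₀`", and `(g • y, g • x)` lies in such a relation iff `y` and `x` agree on `g⁻¹Ω₀`. So
approximating `xᵢ` along `Ωᵢ` means matching `xᵢ` exactly on `Ωᵢ⁻¹Ω₀`. If `X` is `Δ`-irreducible
and the `Ωᵢ` are separated by `Λ = Ω₀Δ⁻¹Ω₀⁻¹`, the sets `Ωᵢ⁻¹Ω₀` are `Δ`-separated and gluing the
`xᵢ` one at a time gives the specifying point. Conversely, applying weak specification for the
entourage "agree at `1`" to the two sets `Ω₁⁻¹, Ω₂⁻¹` shows that `X` is `(Λ ∪ Λ⁻¹)`-irreducible.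
-/

open scoped Pointwise Uniformity

namespace Set

variable {G : Type*} [Group G] {s t u v : Set G}

theorem one_notMem_inv_iff : (1 : G) ∉ s⁻¹ ↔ (1 : G) ∉ s := by
  rw [mem_inv, inv_one]

theorem disjoint_inv_mul_iff :
    Disjoint (s⁻¹ * u) (t⁻¹ * u * v) ↔ Disjoint s (u * v⁻¹ * u⁻¹ * t) := by
  rw [← one_notMem_div_iff, ← one_notMem_inv_mul_iff, ← one_notMem_inv_iff]
  simp only [div_eq_mul_inv, mul_inv_rev, inv_inv, mul_assoc]

theorem disjoint_inv_mul_inv_iff : Disjoint s⁻¹ (t * u⁻¹) ↔ Disjoint s (u * t⁻¹) := by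
  rw [← one_notMem_div_iff, ← one_notMem_inv_mul_iff, ← one_notMem_inv_iff]
  simp only [div_eq_mul_inv, mul_inv_rev, inv_inv, mul_assoc]

theorem disjoint_mul_comm_iff : Disjoint s (t * u) ↔ Disjoint t (s * u⁻¹) := by
  simp only [disjoint_left, mem_mul, mem_inv, not_exists, not_and]
  constructor
  · rintro h b hb a ha c hc rfl
    exact h ha _ hb _ hc (by group)
  · rintro h a ha b hb c hc rfl
    exact h hb _ ha c⁻¹ (by simpa using hc) (by group)

end Set

section DiscreteUniformity

variable {G A : Type*} [UniformSpace A] [DiscreteUniformity A]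

theorem hasBasis_uniformity_pi_discrete :
    (𝓤 (G → A)).HasBasis (fun _ : Finset G => True) fun Ω => {p | ∀ g ∈ Ω, p.1 g = p.2 g} := by
  rw [Pi.uniformity]
  simp only [DiscreteUniformity.eq_principal_setRelId, Filter.comap_principal]
  refine (Filter.hasBasis_iInf_principal_finite _).to_hasBasis
    (fun t ht => ⟨ht.toFinset, trivial, ?_⟩) fun Ω _ => ⟨Ω, Ω.finite_toSet, ?_⟩
  all_goals exact fun p hp => by simpa using hp

theorem hasBasis_uniformity_subtype_pi_discrete (X : Set (G → A)) :
    (𝓤 X).HasBasis (fun _ : Finset G => True)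
      fun Ω => {p | ∀ g ∈ Ω, (p.1 : G → A) g = (p.2 : G → A) g} := by
  rw [uniformity_subtype]
  exact hasBasis_uniformity_pi_discrete.comap _

end DiscreteUniformity

section Subshift

variable {G A : Type*} [Group G]

/-- `X` is `Δ`-irreducible. -/
def IsIrreducibleWith (X : Set (G → A)) (Δ : Finset G) : Prop :=
  ∀ Ω₁ Ω₂ : Finset G, Disjoint (Ω₁ : Set G) ((Ω₂ : Set G) * (Δ : Set G)) →
    ∀ x₁ ∈ X, ∀ x₂ ∈ X, ∃ x ∈ X, (∀ g ∈ Ω₁, x g = x₁ g) ∧ (∀ g ∈ Ω₂, x g = x₂ g)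

theorem IsIrreducibleWith.exists_eqOn {X : Set (G → A)} {Δ : Finset G}
    (hΔ : IsIrreducibleWith X Δ) (hX : X.Nonempty) {ι : Type*} (s : Finset ι)
    (Ω : ι → Finset G) (x : ι → X)
    (hΩ : ∀ j k, j ≠ k → Disjoint (Ω j : Set G) ((Ω k : Set G) * (Δ : Set G))) :
    ∃ y ∈ X, ∀ i ∈ s, Set.EqOn y (x i) (Ω i) := by
  classical
  induction s using Finset.induction_on with
  | empty => exact ⟨hX.some, hX.some_mem, by simp⟩
  | @insert a s ha ih =>
    obtain ⟨y, hyX, hy⟩ := ih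
    have hdisj : Disjoint (s.biUnion Ω : Set G) ((Ω a : Set G) * (Δ : Set G)) := by
      simp only [Finset.coe_biUnion, Set.disjoint_iUnion_left]
      exact fun i hi => hΩ i a (ne_of_mem_of_not_mem hi ha)
    obtain ⟨z, hzX, hzy, hza⟩ := hΔ _ _ hdisj y hyX (x a) (x a).2
    refine ⟨z, hzX, (Finset.forall_mem_insert _ _ _).2 ⟨hza, fun i hi g hg => ?_⟩⟩
    rw [hzy g (Finset.mem_biUnion.2 ⟨i, hi, hg⟩), hy i hi hg]

def shiftOn {X : Set (G → A)} (hinv : ∀ g, ∀ x ∈ X, shift g x ∈ X) (g : G) (x : X) : X :=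
  ⟨shift g x, hinv g x x.2⟩

section DiscreteUniformity

variable [UniformSpace A] [DiscreteUniformity A] {X : Set (G → A)}
  (hinv : ∀ g, ∀ x ∈ X, shift g x ∈ X)

theorem IsIrreducibleWith.weakSpecificationOn {Δ : Finset G} (hΔ : IsIrreducibleWith X Δ) :
    WeakSpecificationOn (𝓤 X) (shiftOn hinv) := by
  classical
  intro U hU
  obtain ⟨Ω₀, -, hΩ₀⟩ := (hasBasis_uniformity_subtype_pi_discrete X).mem_iff.1 hU
  refine ⟨Ω₀ * Δ⁻¹ * Ω₀⁻¹, fun ι _ hι Ω x hΩ => ?_⟩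
  have := Fintype.ofFinite ι
  have hdisj : ∀ j k, j ≠ k → Disjoint (((Ω j)⁻¹ * Ω₀ : Finset G) : Set G)
      ((((Ω k)⁻¹ * Ω₀ : Finset G) : Set G) * Δ) := by
    intro j k hjk
    push_cast
    rw [Set.disjoint_inv_mul_iff]
    simpa [mul_assoc] using hΩ j k hjk
  obtain ⟨y, hyX, hy⟩ := hΔ.exists_eqOn ⟨_, (x hι.some).2⟩ Finset.univ _ x hdisj
  exact ⟨⟨y, hyX⟩, fun i g hg => hΩ₀ fun h hh =>
    hy i (Finset.mem_univ i) (Finset.mul_mem_mul (Finset.inv_mem_inv hg) hh)⟩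

theorem stronglyIrreducible_of_weakSpecificationOn
    (h : WeakSpecificationOn (𝓤 X) (shiftOn hinv)) : StronglyIrreducible X := by
  classical
  obtain ⟨Λ, hΛ⟩ := h _ ((hasBasis_uniformity_subtype_pi_discrete X).mem_of_mem (i := {1}) trivial)
  refine ⟨Λ ∪ Λ⁻¹, fun Ω₁ Ω₂ hΩ x₁ hx₁ x₂ hx₂ => ?_⟩
  have h₁ : Disjoint (Ω₁⁻¹ : Set G) (Λ * (Ω₂ : Set G)⁻¹) :=
    Set.disjoint_inv_mul_inv_iff.2 (hΩ.mono_right (Set.mul_subset_mul_left (by simp)))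
  have h₂ : Disjoint (Ω₂⁻¹ : Set G) (Λ * (Ω₁ : Set G)⁻¹) :=
    Set.disjoint_inv_mul_inv_iff.2
      (Set.disjoint_mul_comm_iff.1 (hΩ.mono_right (Set.mul_subset_mul_left (by simp))))
  obtain ⟨y, hy⟩ := hΛ Bool inferInstance inferInstance (fun b => cond b Ω₁⁻¹ Ω₂⁻¹)
    (fun b => cond b ⟨x₁, hx₁⟩ ⟨x₂, hx₂⟩) (by simpa using ⟨h₂, h₁⟩)
  refine ⟨y, y.2, fun g hg => ?_, fun g hg => ?_⟩
  · simpa [shiftOn, shift] using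
      hy true g⁻¹ (Finset.inv_mem_inv hg) _ (Finset.mem_singleton_self _)
  · simpa [shiftOn, shift] using
      hy false g⁻¹ (Finset.inv_mem_inv hg) _ (Finset.mem_singleton_self _)

end DiscreteUniformity

end Subshift

/-- A `G`-invariant subset `X ⊆ A^G` (with the prodiscrete uniform structure on `A^G` and
the shift action of `G`) is strongly irreducible if and only if the shift action of `G`
on `X` has the weak specification property. -/
theorem stronglyIrreducible_iff_weakSpecification {G A : Type*} [Group G]
    [uA : UniformSpace A] (hdisc : uA = ⊥)
    (X : Set (G → A)) (hinv : ∀ (g : G), ∀ x ∈ X, shift g x ∈ X) :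
    StronglyIrreducible X ↔
      WeakSpecificationOn (𝓤 ↥X)
        (fun g (x : ↥X) => (⟨shift g ↑x, hinv g ↑x x.2⟩ : ↥X)) := by
  have : DiscreteUniformity A := ⟨hdisc⟩
  refine ⟨?_, stronglyIrreducible_of_weakSpecificationOn hinv⟩
  rintro ⟨Δ, hΔ⟩
  exact IsIrreducibleWith.weakSpecificationOn hinv hΔ
end

section
/- (Ornstein–Weiss lemma) Let G be an amenable group and let h be a real-valued function on the nonempty finite subsets of G that is subadditive and right-invariant. Then there exists a real number λ ≥ 0, depending only on h, such that for every left Følner net (F_j)_{j∈J} of G, the net of real numbers (h(F_j)/|F_j|)_{j∈J} converges to λ. -/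
open scoped Pointwise
open Filter

/-!
Extend `h` by `0` at `∅`; this keeps it subadditive and right-invariant. Fix one Følner net and let
`λ` be the liminf of `h(F_j)/|F_j|` along it, so that for every `μ > λ` there are arbitrarily
invariant tiles `B` with `h(B) ≤ μ|B|`. The Ornstein–Weiss quasi-tiling argument turns these into
an upper bound on every sufficiently invariant `F`: take a maximal family of right translates
`Bg ⊆ F` of a tile, each meeting the union of the others in at most `ε|B|` points. Double counting
shows that its union `W` covers at least `ε|F|/2` points, and right invariance with subadditivity
gives `h(W) ≤ μ|W|/(1-ε)`. If the tile is invariant under the tiles of the later stages, so is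
`F \ W`, and we recurse into it; after `n` stages with `(1-ε/2)^n ≤ ε` at most `ε|F|` points remain,
each costing at most `h{1}`. Hence `h(F)/|F| ≤ μ/(1-ε) + ε h{1}`: the limsup along any Følner net is
at most the liminf along any other, and all these limits coincide.
-/

namespace OrnsteinWeiss

variable {G : Type*}

def extendByZero (h : Finset G → ℝ) (A : Finset G) : ℝ := if A.Nonempty then h A else 0

lemma extendByZero_of_nonempty {h : Finset G → ℝ} {A : Finset G} (hA : A.Nonempty) :
    extendByZero h A = h A := if_pos hA

variable [Group G] [DecidableEq G]

structure IsRightInvariantSubadditive (φ : Finset G → ℝ) : Prop where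
  empty : φ ∅ = 0
  union_le : ∀ A B, φ (A ∪ B) ≤ φ A + φ B
  mul_singleton : ∀ A g, φ (A * {g}) = φ A

lemma isRightInvariantSubadditive_extendByZero {h : Finset G → ℝ}
    (hsub : ∀ A B : Finset G, A.Nonempty → B.Nonempty → h (A ∪ B) ≤ h A + h B)
    (hinv : ∀ (A : Finset G) (g : G), A.Nonempty → h (A.image (· * g)) = h A) :
    IsRightInvariantSubadditive (extendByZero h) where
  empty := by simp [extendByZero]
  union_le A B := by
    rcases A.eq_empty_or_nonempty with rfl | hA
    · simp [extendByZero]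
    rcases B.eq_empty_or_nonempty with rfl | hB
    · simp [extendByZero]
    simp only [extendByZero, hA, hB, hA.mono Finset.subset_union_left, if_true]
    exact hsub A B hA hB
  mul_singleton A g := by
    rw [show A * {g} = A.image (· * g) from Finset.image₂_singleton_right]
    rcases A.eq_empty_or_nonempty with rfl | hA
    · simp
    simp only [extendByZero, hA, hA.image, if_true]
    exact hinv A g hA

namespace IsRightInvariantSubadditive

variable {φ : Finset G → ℝ} (hφ : IsRightInvariantSubadditive φ)
include hφ

lemma nonneg (A : Finset G) : 0 ≤ φ A := by
  have := hφ.union_le A A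
  rw [Finset.union_self] at this
  linarith

lemma singleton (x : G) : φ {x} = φ {1} := by
  simpa using hφ.mul_singleton {1} x

lemma le_mul_card (A : Finset G) : φ A ≤ φ {1} * A.card := by
  induction A using Finset.induction_on with
  | empty => simp [hφ.empty]
  | insert x A hx ih =>
    rw [Finset.card_insert_of_notMem hx, Finset.insert_eq]
    push_cast
    linarith [hφ.union_le {x} A, hφ.singleton x]

lemma mul_le (B S : Finset G) : φ (B * S) ≤ S.card * φ B := by
  induction S using Finset.induction_on with
  | empty => simp [hφ.empty]
  | insert g S hg ih =>
    rw [Finset.card_insert_of_notMem hg, Finset.insert_eq, Finset.mul_union]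
    push_cast
    linarith [hφ.union_le (B * {g}) (B * S), hφ.mul_singleton B g]

lemma union_le_mul_card {U V : Finset G} (hUV : Disjoint U V) {κ : ℝ}
    (hU : φ U ≤ κ * U.card) (hV : φ V ≤ κ * V.card) : φ (U ∪ V) ≤ κ * (U ∪ V).card := by
  rw [Finset.card_union_of_disjoint hUV]
  push_cast
  linarith [hφ.union_le U V]

end IsRightInvariantSubadditive

def AlmostInvariant (K : Finset G) (δ : ℝ) (F : Finset G) : Prop :=
  ∀ a ∈ K, ((a • F \ F).card : ℝ) ≤ δ * F.card

lemma AlmostInvariant.mono {K K' F : Finset G} {δ δ' : ℝ} (hF : AlmostInvariant K δ F)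
    (hK : K' ⊆ K) (hδ : δ ≤ δ') : AlmostInvariant K' δ' F :=
  fun a ha => (hF a (hK ha)).trans (by gcongr)

lemma card_sdiff_smul_comm (a : G) (s : Finset G) : (s \ a • s).card = (a • s \ s).card :=
  Finset.card_sdiff_comm (Finset.card_smul_finset a s).symm

lemma card_smul_sdiff_sdiff_le (a : G) (F W : Finset G) :
    (a • (F \ W) \ (F \ W)).card ≤ (a • F \ F).card + (a • W \ W).card := by
  rw [← card_sdiff_smul_comm a W]
  refine (Finset.card_le_card fun x hx => ?_).trans (Finset.card_union_le _ _)
  simp only [Finset.mem_sdiff, Finset.mem_union, Finset.mem_smul_finset, smul_eq_mul] at hx ⊢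
  obtain ⟨⟨y, ⟨hyF, hyW⟩, rfl⟩, hx⟩ := hx
  by_cases hay : a * y ∈ F
  · exact Or.inr ⟨by tauto, fun ⟨z, hz, hzy⟩ => hyW (mul_left_cancel hzy ▸ hz)⟩
  · exact Or.inl ⟨⟨y, hyF, rfl⟩, hay⟩

lemma AlmostInvariant.sdiff {K F W : Finset G} {δ δ' : ℝ} (hF : AlmostInvariant K δ F)
    (hW : AlmostInvariant K δ' W) (a : G) (ha : a ∈ K) :
    ((a • (F \ W) \ (F \ W)).card : ℝ) ≤ δ * F.card + δ' * W.card := by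
  have := card_smul_sdiff_sdiff_le a F W
  have : ((a • (F \ W) \ (F \ W)).card : ℝ) ≤ (a • F \ F).card + (a • W \ W).card := by
    exact_mod_cast this
  linarith [hF a ha, hW a ha]

lemma card_smul_mul_sdiff_le (a : G) (B S : Finset G) :
    (a • (B * S) \ (B * S)).card ≤ (a • B \ B).card * S.card := by
  refine (Finset.card_le_card fun x hx => ?_).trans Finset.card_mul_le
  simp only [Finset.mem_sdiff, Finset.mem_smul_finset, Finset.mem_mul, smul_eq_mul] at hx ⊢
  obtain ⟨⟨_, ⟨b, hb, s, hs, rfl⟩, rfl⟩, hx⟩ := hx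
  exact ⟨a * b, ⟨⟨b, hb, rfl⟩, fun hab => hx ⟨a * b, hab, s, hs, mul_assoc a b s⟩⟩, s, hs,
    mul_assoc a b s⟩

def fittingShifts (B R : Finset G) : Finset G := R.filter fun g => B * {g} ⊆ R

lemma mul_subset_of_subset_fittingShifts {B R S : Finset G} (hS : S ⊆ fittingShifts B R) :
    B * S ⊆ R := by
  intro x hx
  obtain ⟨b, hb, g, hg, rfl⟩ := Finset.mem_mul.mp hx
  exact (Finset.mem_filter.mp (hS hg)).2 (Finset.mul_mem_mul hb (Finset.mem_singleton_self g))

lemma card_sdiff_fittingShifts_le (B R : Finset G) :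
    (R \ fittingShifts B R).card ≤ ∑ b ∈ B, (b • R \ R).card := by
  calc (R \ fittingShifts B R).card ≤ (B.biUnion fun b => R \ b⁻¹ • R).card := by
        refine Finset.card_le_card fun g hg => ?_
        simp only [fittingShifts, Finset.mem_sdiff, Finset.mem_filter, Finset.subset_iff,
          Finset.mem_mul, Finset.mem_singleton, Finset.mem_biUnion,
          Finset.mem_inv_smul_finset_iff, smul_eq_mul] at hg ⊢
        grind
    _ ≤ ∑ b ∈ B, (R \ b⁻¹ • R).card := Finset.card_biUnion_le
    _ = ∑ b ∈ B, (b • R \ R).card := Finset.sum_congr rfl fun b _ => by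
        rw [← Finset.card_smul_finset b, Finset.smul_finset_sdiff, smul_inv_smul]

lemma card_fittingShifts_ge {B R : Finset G} {δ : ℝ} (hR : AlmostInvariant B δ R) :
    (1 - B.card * δ) * R.card ≤ (fittingShifts B R).card := by
  have hsub : (R \ fittingShifts B R).card + (fittingShifts B R).card = R.card :=
    Finset.card_sdiff_add_card_eq_card (Finset.filter_subset _ _)
  have hsum : ((R \ fittingShifts B R).card : ℝ) ≤ B.card * (δ * R.card) := by
    calc ((R \ fittingShifts B R).card : ℝ) ≤ ∑ b ∈ B, ((b • R \ R).card : ℝ) := by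
          exact_mod_cast card_sdiff_fittingShifts_le B R
      _ ≤ ∑ _b ∈ B, δ * R.card := Finset.sum_le_sum hR
      _ = B.card * (δ * R.card) := by rw [Finset.sum_const, nsmul_eq_mul]
  have : ((R \ fittingShifts B R).card : ℝ) + (fittingShifts B R).card = R.card := by
    exact_mod_cast hsub
  nlinarith

lemma sum_card_mul_singleton_inter_le (B W T : Finset G) :
    ∑ g ∈ T, (B * {g} ∩ W).card ≤ B.card * W.card := by
  have hfiber : ∀ g, (B * {g} ∩ W).card = (B.filter (· * g ∈ W)).card := fun g => by
    have : B * {g} ∩ W = (B.filter (· * g ∈ W)).image (· * g) := by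
      rw [show B * {g} = B.image (· * g) from Finset.image₂_singleton_right,
        ← Finset.filter_mem_eq_inter, Finset.filter_image]
    rw [this, Finset.card_image_of_injective _ (mul_left_injective g)]
  calc ∑ g ∈ T, (B * {g} ∩ W).card
      = ∑ b ∈ B, (T.filter (b * · ∈ W)).card := by
        simp_rw [hfiber]
        exact Finset.sum_card_bipartiteAbove_eq_sum_card_bipartiteBelow (fun g b => b * g ∈ W)
    _ ≤ ∑ _b ∈ B, W.card := Finset.sum_le_sum fun b _ =>
        Finset.card_le_card_of_injOn (b * ·) (fun g hg => (Finset.mem_filter.mp hg).2)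
          (mul_right_injective b).injOn
    _ = B.card * W.card := by rw [Finset.sum_const, smul_eq_mul]

lemma exists_maximal_packing {B : Finset G} (hB : B.Nonempty) {ε : ℝ} (hε : ε < 1)
    (R : Finset G) : ∃ S ⊆ fittingShifts B R, (1 - ε) * (B.card * S.card) ≤ (B * S).card ∧
      ∀ g ∈ fittingShifts B R, ε * B.card < (B * {g} ∩ (B * S)).card := by
  have hBpos : (0 : ℝ) < B.card := by exact_mod_cast hB.card_pos
  set T := (fittingShifts B R).powerset.filter fun S => (1 - ε) * (B.card * S.card) ≤ (B * S).card
  obtain ⟨S, hST, hmax⟩ := T.exists_max_image (fun S => (B * S).card) ⟨∅, by simp [T]⟩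
  rw [Finset.mem_filter, Finset.mem_powerset] at hST
  refine ⟨S, hST.1, hST.2, fun g hg => ?_⟩
  by_contra! hsmall
  have hgS : g ∉ S := fun hgS => by
    rw [Finset.inter_eq_left.mpr (Finset.mul_subset_mul_left (by simpa using hgS)),
      Finset.card_mul_singleton] at hsmall
    nlinarith
  have hgrow : (B * S).card + (1 - ε) * B.card ≤ (B * insert g S).card := by
    have := Finset.card_union_add_card_inter (B * {g}) (B * S)
    rw [Finset.card_mul_singleton] at this
    rw [Finset.insert_eq, Finset.mul_union]
    have : ((B * {g} ∪ B * S).card : ℝ) + (B * {g} ∩ (B * S)).card = B.card + (B * S).card := by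
      exact_mod_cast this
    linarith
  have hmem : insert g S ∈ T := by
    rw [Finset.mem_filter, Finset.mem_powerset, Finset.card_insert_of_notMem hgS]
    refine ⟨Finset.insert_subset hg hST.1, ?_⟩
    push_cast
    linarith [hST.2]
  have := hmax _ hmem
  have : ((B * insert g S).card : ℝ) ≤ (B * S).card := by exact_mod_cast this
  nlinarith

lemma mul_card_fittingShifts_le {B R S : Finset G} (hB : B.Nonempty) {ε : ℝ}
    (hS : ∀ g ∈ fittingShifts B R, ε * B.card < (B * {g} ∩ (B * S)).card) :
    ε * (fittingShifts B R).card ≤ (B * S).card := by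
  have hBpos : (0 : ℝ) < B.card := by exact_mod_cast hB.card_pos
  have hcount : ((fittingShifts B R).card : ℝ) * (ε * B.card) ≤ B.card * (B * S).card := by
    calc ((fittingShifts B R).card : ℝ) * (ε * B.card) = ∑ _g ∈ fittingShifts B R, ε * B.card := by
          rw [Finset.sum_const, nsmul_eq_mul]
      _ ≤ ∑ g ∈ fittingShifts B R, ((B * {g} ∩ (B * S)).card : ℝ) :=
          Finset.sum_le_sum fun g hg => (hS g hg).le
      _ ≤ B.card * (B * S).card := by
          exact_mod_cast sum_card_mul_singleton_inter_le B (B * S) (fittingShifts B R)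
  nlinarith

def HasInvariantTiles (φ : Finset G → ℝ) (μ : ℝ) : Prop :=
  ∀ (K : Finset G) (δ : ℝ), 0 < δ →
    ∃ B : Finset G, B.Nonempty ∧ φ B ≤ μ * B.card ∧ AlmostInvariant K δ B

def Packable (φ : Finset G → ℝ) (κ ρ : ℝ) : Prop :=
  ∃ K : Finset G, ∃ δ > 0, ∀ F : Finset G, F.Nonempty → AlmostInvariant K δ F →
    ∃ U ⊆ F, φ U ≤ κ * U.card ∧ ((F \ U).card : ℝ) ≤ ρ * F.card

lemma Packable.mono {φ : Finset G → ℝ} {κ ρ ρ' : ℝ} (hpack : Packable φ κ ρ) (hρ : ρ ≤ ρ') :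
    Packable φ κ ρ' := by
  obtain ⟨K, δ, hδ, hK⟩ := hpack
  refine ⟨K, δ, hδ, fun F hF hFK => ?_⟩
  obtain ⟨U, hUF, hUφ, hU⟩ := hK F hF hFK
  exact ⟨U, hUF, hUφ, hU.trans (by gcongr)⟩

namespace IsRightInvariantSubadditive

variable {φ : Finset G → ℝ} (hφ : IsRightInvariantSubadditive φ)
include hφ

lemma exists_packing {μ ε : ℝ} (hμ : 0 ≤ μ) (hε0 : 0 < ε) (hε : ε ≤ 1 / 2)
    {B F : Finset G} (hB : B.Nonempty) (hBμ : φ B ≤ μ * B.card)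
    (hF : AlmostInvariant B (1 / (2 * B.card)) F) :
    ∃ W ⊆ F, φ W ≤ μ / (1 - ε) * W.card ∧ ε * F.card ≤ 2 * W.card ∧
      ∀ K δ, AlmostInvariant K δ B → AlmostInvariant K (2 * δ) W := by
  have hBpos : (0 : ℝ) < B.card := by exact_mod_cast hB.card_pos
  obtain ⟨S, hS, hcover, hmax⟩ := exists_maximal_packing hB (by linarith : ε < 1) F
  have hBS : (B.card : ℝ) * S.card ≤ 2 * (B * S).card := by nlinarith
  refine ⟨B * S, mul_subset_of_subset_fittingShifts hS, ?_, ?_, fun K δ hBK a ha => ?_⟩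
  · rw [div_mul_eq_mul_div, le_div_iff₀ (by linarith)]
    calc φ (B * S) * (1 - ε) ≤ S.card * φ B * (1 - ε) := by
          gcongr
          · linarith
          · exact hφ.mul_le B S
      _ ≤ S.card * (μ * B.card) * (1 - ε) := by gcongr; linarith
      _ = μ * ((1 - ε) * (B.card * S.card)) := by ring
      _ ≤ μ * (B * S).card := by gcongr
  · have hshifts := card_fittingShifts_ge hF
    rw [show (B.card : ℝ) * (1 / (2 * B.card)) = 1 / 2 by field_simp] at hshifts
    nlinarith [mul_card_fittingShifts_le hB hmax]
  · have hB' := hBK a ha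
    calc ((a • (B * S) \ (B * S)).card : ℝ) ≤ (a • B \ B).card * S.card := by
          exact_mod_cast card_smul_mul_sdiff_le a B S
      _ ≤ δ * B.card * S.card := by gcongr
      _ ≤ 2 * δ * (B * S).card := by
          have hδ : 0 ≤ δ := by
            have : (0 : ℝ) ≤ δ * B.card := (Nat.cast_nonneg _).trans hB'
            exact nonneg_of_mul_nonneg_left this hBpos
          nlinarith

lemma packable_zero (κ : ℝ) : Packable φ κ 1 :=
  ⟨∅, 1, one_pos, fun F _ _ => ⟨∅, Finset.empty_subset F, by simp [hφ.empty], by simp⟩⟩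

lemma packable_succ {μ ε ρ : ℝ} (hμ : 0 ≤ μ) (hε0 : 0 < ε) (hε : ε ≤ 1 / 2) (hρ : 0 ≤ ρ)
    (tiles : HasInvariantTiles φ μ) (hpack : Packable φ (μ / (1 - ε)) ρ) :
    Packable φ (μ / (1 - ε)) (max ε (ρ * (1 - ε / 2))) := by
  obtain ⟨K, δ, hδ, hK⟩ := hpack
  -- `B` is so invariant under `K` that `F \ W` stays `δ`-invariant under `K` as long as it has
  -- more than `ε|F|` points; otherwise `W` alone already leaves at most `ε|F|` points uncovered.
  obtain ⟨B, hB, hBμ, hBK⟩ := tiles K (ε * δ / 4) (by positivity)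
  have hBpos : (0 : ℝ) < B.card := by exact_mod_cast hB.card_pos
  refine ⟨K ∪ B, min (ε * δ / 4) (1 / (2 * B.card)), by positivity, fun F hF hFK => ?_⟩
  obtain ⟨W, hWF, hWφ, hWcard, hWK⟩ := hφ.exists_packing hμ hε0 hε hB hBμ
    (hFK.mono Finset.subset_union_right (min_le_right _ _))
  have hWK := hWK K _ hBK
  have hRW : ((F \ W).card : ℝ) + W.card = F.card := by
    exact_mod_cast Finset.card_sdiff_add_card_eq_card hWF
  by_cases hRsmall : ((F \ W).card : ℝ) ≤ ε * F.card
  · exact ⟨W, hWF, hWφ, hRsmall.trans (by gcongr; exact le_max_left _ _)⟩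
  push Not at hRsmall
  have hFpos : (0 : ℝ) < F.card := by exact_mod_cast hF.card_pos
  have hR : (F \ W).Nonempty := by
    rw [← Finset.card_pos, ← Nat.cast_pos (α := ℝ)]
    nlinarith
  have hRK : AlmostInvariant K δ (F \ W) := fun a ha => by
    have := (hFK.mono Finset.subset_union_left (min_le_left _ _)).sdiff hWK a ha
    have : δ * (ε * F.card) ≤ δ * (F \ W).card := by gcongr
    have : ε * δ * W.card ≤ ε * δ * F.card := by gcongr
    linarith
  obtain ⟨U, hUR, hUφ, hU⟩ := hK _ hR hRK
  refine ⟨W ∪ U, Finset.union_subset hWF (hUR.trans Finset.sdiff_subset),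
    hφ.union_le_mul_card (Finset.disjoint_of_subset_right hUR Finset.disjoint_sdiff) hWφ hUφ, ?_⟩
  rw [← Finset.sup_eq_union, ← sdiff_sdiff_left]
  calc (((F \ W) \ U).card : ℝ) ≤ ρ * (F \ W).card := hU
    _ ≤ ρ * (1 - ε / 2) * F.card := by nlinarith
    _ ≤ max ε (ρ * (1 - ε / 2)) * F.card := by gcongr; exact le_max_right _ _

lemma packable_pow {μ ε : ℝ} (hμ : 0 ≤ μ) (hε0 : 0 < ε) (hε : ε ≤ 1 / 2)
    (tiles : HasInvariantTiles φ μ) (n : ℕ) :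
    Packable φ (μ / (1 - ε)) (max ε ((1 - ε / 2) ^ n)) := by
  induction n with
  | zero => exact (hφ.packable_zero _).mono (by simp)
  | succ n ih =>
    refine (hφ.packable_succ hμ hε0 hε (by positivity) tiles ih).mono ?_
    rw [max_mul_of_nonneg _ _ (by linarith), pow_succ]
    refine max_le (le_max_left _ _) (max_le (le_max_of_le_left ?_) (le_max_right _ _))
    nlinarith

theorem exists_le_of_hasInvariantTiles {μ ε : ℝ} (hμ : 0 ≤ μ) (hε0 : 0 < ε) (hε : ε ≤ 1 / 2)
    (tiles : HasInvariantTiles φ μ) : ∃ K : Finset G, ∃ δ > 0, ∀ F : Finset G, F.Nonempty →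
      AlmostInvariant K δ F → φ F ≤ (μ / (1 - ε) + ε * φ {1}) * F.card := by
  obtain ⟨n, hn⟩ := exists_pow_lt_of_lt_one hε0 (by linarith : 1 - ε / 2 < 1)
  obtain ⟨K, δ, hδ, hK⟩ := hφ.packable_pow hμ hε0 hε tiles n
  refine ⟨K, δ, hδ, fun F hF hFK => ?_⟩
  obtain ⟨U, hUF, hUφ, hU⟩ := hK F hF hFK
  rw [max_eq_left hn.le] at hU
  have hκ : 0 ≤ μ / (1 - ε) := div_nonneg hμ (by linarith)
  calc φ F = φ (U ∪ (F \ U)) := by rw [Finset.union_sdiff_of_subset hUF]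
    _ ≤ φ U + φ {1} * (F \ U).card := by linarith [hφ.union_le U (F \ U), hφ.le_mul_card (F \ U)]
    _ ≤ μ / (1 - ε) * F.card + φ {1} * (ε * F.card) := by
        gcongr
        · exact hUφ.trans (by gcongr)
        · exact hφ.nonneg {1}
    _ = (μ / (1 - ε) + ε * φ {1}) * F.card := by ring

end IsRightInvariantSubadditive

end OrnsteinWeiss

attribute [local instance] FolnerNet.pre

namespace FolnerNet

variable {G : Type*} [Group G] (N : FolnerNet G)

instance atTop_neBot : (atTop : Filter N.J).NeBot :=
  atTop_neBot_iff.mpr ⟨N.nonempty, N.dir⟩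

lemma eventually_almostInvariant [DecidableEq G] (K : Finset G) {δ : ℝ} (hδ : 0 < δ) :
    ∀ᶠ j in atTop, OrnsteinWeiss.AlmostInvariant K δ (N.F j) := by
  refine (Filter.eventually_all_finset K).mpr fun a _ => ?_
  filter_upwards [(N.folner a).eventually (gt_mem_nhds hδ)] with j hj
  rw [← Finset.coe_smul_finset, ← Finset.coe_sdiff, Set.ncard_coe_finset,
    div_lt_iff₀ (by exact_mod_cast (N.F_nonempty j).card_pos)] at hj
  exact hj.le

noncomputable def ratio (φ : Finset G → ℝ) (j : N.J) : ℝ := φ (N.F j) / (N.F j).card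

end FolnerNet

namespace OrnsteinWeiss.IsRightInvariantSubadditive

open Topology

variable {G : Type*} [Group G] [DecidableEq G] {φ : Finset G → ℝ}
  (hφ : IsRightInvariantSubadditive φ)
include hφ

lemma ratio_nonneg (N : FolnerNet G) (j : N.J) : 0 ≤ N.ratio φ j :=
  div_nonneg (hφ.nonneg _) (Nat.cast_nonneg _)

lemma ratio_le (N : FolnerNet G) (j : N.J) : N.ratio φ j ≤ φ {1} :=
  div_le_of_le_mul₀ (Nat.cast_nonneg _) (hφ.nonneg _) (hφ.le_mul_card _)

lemma isBoundedUnder_le_ratio (N : FolnerNet G) : IsBoundedUnder (· ≤ ·) atTop (N.ratio φ) :=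
  isBoundedUnder_of ⟨_, hφ.ratio_le N⟩

lemma isBoundedUnder_ge_ratio (N : FolnerNet G) : IsBoundedUnder (· ≥ ·) atTop (N.ratio φ) :=
  isBoundedUnder_of ⟨_, hφ.ratio_nonneg N⟩

lemma liminf_ratio_nonneg (M : FolnerNet G) : 0 ≤ liminf (M.ratio φ) atTop :=
  le_liminf_of_le (isCoboundedUnder_ge_of_le _ (hφ.ratio_le M))
    (Eventually.of_forall (hφ.ratio_nonneg M))

lemma hasInvariantTiles_of_liminf_lt (M : FolnerNet G) {μ : ℝ}
    (hμ : liminf (M.ratio φ) atTop < μ) : HasInvariantTiles φ μ := by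
  intro K δ hδ
  obtain ⟨j, hjK, hjμ⟩ := ((M.eventually_almostInvariant K hδ).and_frequently
    (frequently_lt_of_liminf_lt (isCoboundedUnder_ge_of_le _ (hφ.ratio_le M)) hμ)).exists
  refine ⟨M.F j, M.F_nonempty j, ?_, hjK⟩
  exact ((div_lt_iff₀ (by exact_mod_cast (M.F_nonempty j).card_pos)).mp hjμ).le

lemma limsup_ratio_le_liminf (M N : FolnerNet G) :
    limsup (N.ratio φ) atTop ≤ liminf (M.ratio φ) atTop := by
  set lam := liminf (M.ratio φ) atTop
  have hbound : ∀ ε ∈ Set.Ioo (0 : ℝ) (1 / 2),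
      limsup (N.ratio φ) atTop ≤ (lam + ε) / (1 - ε) + ε * φ {1} := by
    rintro ε ⟨hε0, hε⟩
    obtain ⟨K, δ, hδ, hK⟩ := hφ.exists_le_of_hasInvariantTiles
      (by linarith [hφ.liminf_ratio_nonneg M]) hε0 hε.le
      (hφ.hasInvariantTiles_of_liminf_lt M (lt_add_of_pos_right lam hε0))
    refine limsup_le_of_le (isCoboundedUnder_le_of_le _ (hφ.ratio_nonneg N)) ?_
    filter_upwards [N.eventually_almostInvariant K hδ] with j hj
    exact (div_le_iff₀ (by exact_mod_cast (N.F_nonempty j).card_pos)).mpr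
      (hK _ (N.F_nonempty j) hj)
  have hlim : Tendsto (fun ε => (lam + ε) / (1 - ε) + ε * φ {1}) (𝓝[>] 0) (𝓝 lam) := by
    have : ContinuousAt (fun ε : ℝ => (lam + ε) / (1 - ε) + ε * φ {1}) 0 := by
      fun_prop (disch := norm_num)
    simpa using this.tendsto.mono_left nhdsWithin_le_nhds
  exact ge_of_tendsto hlim (mem_of_superset (Ioo_mem_nhdsGT (by norm_num)) hbound)

lemma tendsto_ratio (M N : FolnerNet G) :
    Tendsto (N.ratio φ) atTop (𝓝 (liminf (M.ratio φ) atTop)) := by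
  have hM := liminf_le_limsup (hφ.isBoundedUnder_le_ratio M) (hφ.isBoundedUnder_ge_ratio M)
  have hN := liminf_le_limsup (hφ.isBoundedUnder_le_ratio N) (hφ.isBoundedUnder_ge_ratio N)
  have hMN := hφ.limsup_ratio_le_liminf M N
  have hNM := hφ.limsup_ratio_le_liminf N M
  exact tendsto_of_liminf_eq_limsup (by linarith) (by linarith)
    (hφ.isBoundedUnder_le_ratio N) (hφ.isBoundedUnder_ge_ratio N)

end OrnsteinWeiss.IsRightInvariantSubadditive

/-- Ornstein–Weiss lemma: if `G` is an amenable group and `h` is a subadditive,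
right-invariant real-valued function on the nonempty finite subsets of `G`, then there
is a real number `λ ≥ 0`, depending only on `h`, such that `h(F_j)/|F_j| → λ` along
every left Følner net `(F_j)` for `G`. -/
theorem ornstein_weiss {G : Type*} [Group G] [DecidableEq G]
    (hamen : Nonempty (FolnerNet G))
    (h : Finset G → ℝ)
    (hsub : ∀ A B : Finset G, A.Nonempty → B.Nonempty → h (A ∪ B) ≤ h A + h B)
    (hinv : ∀ (A : Finset G) (g : G), A.Nonempty → h (A.image (· * g)) = h A) :
    ∃ lam : ℝ, 0 ≤ lam ∧ ∀ N : FolnerNet G,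
      Filter.Tendsto (fun j => h (N.F j) / ((N.F j).card : ℝ))
        (@Filter.atTop N.J N.pre) (nhds lam) := by
  obtain ⟨M⟩ := hamen
  have hφ := OrnsteinWeiss.isRightInvariantSubadditive_extendByZero hsub hinv
  refine ⟨liminf (M.ratio (OrnsteinWeiss.extendByZero h)) atTop, hφ.liminf_ratio_nonneg M,
    fun N => ?_⟩
  refine (hφ.tendsto_ratio M N).congr fun j => ?_
  rw [FolnerNet.ratio, OrnsteinWeiss.extendByZero_of_nonempty (N.F_nonempty j)]
end
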